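/- arXiv:2311.03086 — 7 statements merged into one kernel-verified Lean document; each statement's English description precedes it below -/
import Mathlib

section
/- For every f ∈ C[0,α₀] and every η ∈ (0,α₀], the quantity F₁(η,f) satisfies the two-sided bound exp(−α₀·a·N₁ᴹ·η^{μ−ν+1}/(L₁ₘ·(μ−ν+1)))·η^μ/(L₁ᴹ·μ) ≤ F₁(η,f) ≤ η^μ/(L₁ₘ·μ). -/
open Real Set Filter MeasureTheory Topology

noncomputable section

/-- `E₁(η,f) = exp(−α₀·a·∫₀^η N*(f)(s)/L*(f)(s) ds)`. -/
def E1 (α₀ a : ℝ) (Lstar Nstar : (ℝ → ℝ) → ℝ → ℝ) (f : ℝ → ℝ) (η : ℝ) : ℝ :=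
  Real.exp (-(α₀ * a * ∫ s in (0:ℝ)..η, Nstar f s / Lstar f s))

/-- `F₁(η,f) = ∫₀^η E₁(s,f)/(s·L*(f)(s)) ds`. -/
def F1 (α₀ a : ℝ) (Lstar Nstar : (ℝ → ℝ) → ℝ → ℝ) (f : ℝ → ℝ) (η : ℝ) : ℝ :=
  ∫ s in (0:ℝ)..η, E1 α₀ a Lstar Nstar f s / (s * Lstar f s)

lemma int_mono_Ioc {f g : ℝ → ℝ} {b : ℝ} (hb : 0 ≤ b)
    (hf : IntervalIntegrable f volume 0 b) (hg : IntervalIntegrable g volume 0 b)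
    (h : ∀ x ∈ Ioc (0:ℝ) b, f x ≤ g x) :
    ∫ x in (0:ℝ)..b, f x ≤ ∫ x in (0:ℝ)..b, g x := by
  apply intervalIntegral.integral_mono_ae_restrict hb hf hg
  rw [← Measure.restrict_congr_set Ioc_ae_eq_Icc]
  exact ae_restrict_of_forall_mem measurableSet_Ioc h

lemma integral_rpow0 {b r : ℝ} (hr : -1 < r) :
    ∫ x in (0:ℝ)..b, x ^ r = b ^ (r+1) / (r+1) := by
  rw [integral_rpow (Or.inl hr), Real.zero_rpow (by linarith), sub_zero]

theorem statement1
    (α₀ a μ ν L1m L1M N1m N1M : ℝ)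
    (hα₀ : 0 < α₀) (ha : 0 < a)
    (hμpos : 0 < μ) (hνpos : 0 < ν) (hL1m : 0 < L1m) (hL1M : 0 < L1M)
    (hN1m : 0 < N1m) (hN1M : 0 < N1M)
    (hμ : max 1 ν < μ) (hLmM : L1m ≤ L1M) (hNmM : N1m ≤ N1M)
    (Lstar Nstar : (ℝ → ℝ) → ℝ → ℝ)
    (hLcont : ∀ f : ℝ → ℝ, ContinuousOn f (Icc 0 α₀) → ContinuousOn (Lstar f) (Ioc 0 α₀))
    (hNcont : ∀ f : ℝ → ℝ, ContinuousOn f (Icc 0 α₀) → ContinuousOn (Nstar f) (Ioc 0 α₀))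
    (hLbd : ∀ f : ℝ → ℝ, ContinuousOn f (Icc 0 α₀) → ∀ η ∈ Ioc (0:ℝ) α₀,
      L1m * η ^ (-μ) ≤ Lstar f η ∧ Lstar f η ≤ L1M * η ^ (-μ))
    (hNbd : ∀ f : ℝ → ℝ, ContinuousOn f (Icc 0 α₀) → ∀ η ∈ Ioc (0:ℝ) α₀,
      N1m * η ^ (-ν) ≤ Nstar f η ∧ Nstar f η ≤ N1M * η ^ (-ν))
    (f : ℝ → ℝ) (hf : ContinuousOn f (Icc 0 α₀))
    (hint1 : ∀ η ∈ Icc (0:ℝ) α₀,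
      IntervalIntegrable (fun s => Nstar f s / Lstar f s) volume 0 η)
    (hint2 : ∀ η ∈ Icc (0:ℝ) α₀,
      IntervalIntegrable (fun s => E1 α₀ a Lstar Nstar f s / (s * Lstar f s)) volume 0 η)
    (η : ℝ) (hη : η ∈ Ioc (0:ℝ) α₀) :
    Real.exp (-(α₀ * a * N1M * η ^ (μ - ν + 1) / (L1m * (μ - ν + 1)))) * η ^ μ / (L1M * μ) ≤
        F1 α₀ a Lstar Nstar f η ∧
      F1 α₀ a Lstar Nstar f η ≤ η ^ μ / (L1m * μ) := by
  have hμν : ν < μ := lt_of_le_of_lt (le_max_right 1 ν) hμ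
  have h1μ : (1:ℝ) < μ := lt_of_le_of_lt (le_max_left 1 ν) hμ
  have hη0 : 0 < η := hη.1
  have hηα : η ≤ α₀ := hη.2
  have hmem : ∀ s ∈ Ioc (0:ℝ) η, s ∈ Ioc (0:ℝ) α₀ := fun s hs => ⟨hs.1, hs.2.trans hηα⟩
  have hLpos : ∀ s ∈ Ioc (0:ℝ) α₀, 0 < Lstar f s := fun s hs =>
    lt_of_lt_of_le (mul_pos hL1m (Real.rpow_pos_of_pos hs.1 _)) (hLbd f hf s hs).1
  set C := Real.exp (-(α₀ * a * N1M * η ^ (μ - ν + 1) / (L1m * (μ - ν + 1)))) with hC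
  -- bounds on the inner integral G(s)
  have hG : ∀ s ∈ Ioc (0:ℝ) η,
      0 ≤ (∫ t in (0:ℝ)..s, Nstar f t / Lstar f t) ∧
      (∫ t in (0:ℝ)..s, Nstar f t / Lstar f t) ≤ N1M * s ^ (μ-ν+1) / (L1m * (μ-ν+1)) := by
    intro s hs
    have hs0 : 0 < s := hs.1
    have hint : IntervalIntegrable (fun t => Nstar f t / Lstar f t) volume 0 s :=
      hint1 s ⟨hs0.le, hs.2.trans hηα⟩
    constructor
    · have h := int_mono_Ioc (f := fun _ => (0:ℝ)) hs0.le (intervalIntegrable_const) hint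
        (fun t ht => by
          have htα := hmem t ⟨ht.1, ht.2.trans hs.2⟩
          have hN0 : (0:ℝ) ≤ Nstar f t :=
            le_trans (mul_pos hN1m (Real.rpow_pos_of_pos ht.1 _)).le (hNbd f hf t htα).1
          exact div_nonneg hN0 (hLpos t htα).le)
      simpa using h
    · have hcmp := int_mono_Ioc (g := fun t => N1M / L1m * t ^ (μ - ν)) hs0.le hint
        ((intervalIntegral.intervalIntegrable_rpow' (by linarith : (-1:ℝ) < μ - ν)).const_mul
          (N1M / L1m))
        (fun t ht => by
          have ht0 : 0 < t := ht.1
          have htα := hmem t ⟨ht.1, ht.2.trans hs.2⟩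
          have h1 : Nstar f t / Lstar f t ≤ (N1M * t ^ (-ν)) / (L1m * t ^ (-μ)) :=
            div_le_div₀ (mul_pos hN1M (Real.rpow_pos_of_pos ht0 _)).le
              (hNbd f hf t htα).2
              (mul_pos hL1m (Real.rpow_pos_of_pos ht0 _)) (hLbd f hf t htα).1
          have h2 : (N1M * t ^ (-ν)) / (L1m * t ^ (-μ)) = N1M / L1m * t ^ (μ - ν) := by
            rw [show μ - ν = -ν - -μ by ring, Real.rpow_sub ht0]
            field_simp
          exact le_of_le_of_eq h1 h2)
      have hval : ∫ t in (0:ℝ)..s, N1M / L1m * t ^ (μ - ν)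
          = N1M * s ^ (μ-ν+1) / (L1m * (μ-ν+1)) := by
        rw [intervalIntegral.integral_const_mul, integral_rpow0 (by linarith)]
        field_simp
      rw [← hval]; exact hcmp
  -- bounds on E1
  have hE1 : ∀ s ∈ Ioc (0:ℝ) η, C ≤ E1 α₀ a Lstar Nstar f s ∧ E1 α₀ a Lstar Nstar f s ≤ 1 := by
    intro s hs
    obtain ⟨hG0, hGub⟩ := hG s hs
    have haa : 0 ≤ α₀ * a := (mul_pos hα₀ ha).le
    constructor
    · rw [hC]
      apply Real.exp_le_exp.mpr
      rw [neg_le_neg_iff]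
      have hpow : s ^ (μ-ν+1) ≤ η ^ (μ-ν+1) :=
        Real.rpow_le_rpow hs.1.le hs.2 (by linarith)
      calc α₀ * a * (∫ t in (0:ℝ)..s, Nstar f t / Lstar f t)
          ≤ α₀ * a * (N1M * s ^ (μ-ν+1) / (L1m * (μ-ν+1))) :=
            mul_le_mul_of_nonneg_left hGub haa
        _ ≤ α₀ * a * (N1M * η ^ (μ-ν+1) / (L1m * (μ-ν+1))) := by
            apply mul_le_mul_of_nonneg_left _ haa
            apply div_le_div_of_nonneg_right _ (mul_pos hL1m (by linarith)).le
            exact mul_le_mul_of_nonneg_left hpow hN1M.le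
        _ = α₀ * a * N1M * η ^ (μ - ν + 1) / (L1m * (μ - ν + 1)) := by ring
    · rw [show (1:ℝ) = Real.exp 0 by simp]
      apply Real.exp_le_exp.mpr
      simp only [neg_nonpos]
      positivity
  -- pointwise bounds on the F1 integrand
  have hub : ∀ s ∈ Ioc (0:ℝ) η,
      E1 α₀ a Lstar Nstar f s / (s * Lstar f s) ≤ s ^ (μ-1) / L1m := by
    intro s hs
    have hs0 : 0 < s := hs.1
    have hsα := hmem s hs
    have hden : L1m * s ^ (1-μ) ≤ s * Lstar f s := by
      have h : L1m * s ^ (1-μ) = s * (L1m * s ^ (-μ)) := by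
        rw [show (1:ℝ) - μ = 1 + -μ by ring, Real.rpow_add hs0, Real.rpow_one]; ring
      rw [h]
      exact mul_le_mul_of_nonneg_left (hLbd f hf s hsα).1 hs0.le
    have heq : (1:ℝ) / (L1m * s ^ (1-μ)) = s ^ (μ-1) / L1m := by
      rw [show (1:ℝ) - μ = -(μ-1) by ring, Real.rpow_neg hs0.le]
      rw [one_div, mul_inv, inv_inv, div_eq_mul_inv, mul_comm]
    calc E1 α₀ a Lstar Nstar f s / (s * Lstar f s)
        ≤ 1 / (L1m * s ^ (1-μ)) :=
          div_le_div₀ zero_le_one (hE1 s hs).2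
            (mul_pos hL1m (Real.rpow_pos_of_pos hs0 _)) hden
      _ = s ^ (μ-1) / L1m := heq
  have hlb : ∀ s ∈ Ioc (0:ℝ) η,
      C / L1M * s ^ (μ-1) ≤ E1 α₀ a Lstar Nstar f s / (s * Lstar f s) := by
    intro s hs
    have hs0 : 0 < s := hs.1
    have hsα := hmem s hs
    have hden : s * Lstar f s ≤ L1M * s ^ (1-μ) := by
      have h : L1M * s ^ (1-μ) = s * (L1M * s ^ (-μ)) := by
        rw [show (1:ℝ) - μ = 1 + -μ by ring, Real.rpow_add hs0, Real.rpow_one]; ring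
      rw [h]
      exact mul_le_mul_of_nonneg_left (hLbd f hf s hsα).2 hs0.le
    have hdpos : 0 < s * Lstar f s := mul_pos hs0 (hLpos s hsα)
    have heq : C / (L1M * s ^ (1-μ)) = C / L1M * s ^ (μ-1) := by
      rw [show (1:ℝ) - μ = -(μ-1) by ring, Real.rpow_neg hs0.le]
      have hp : (0:ℝ) < s ^ (μ-1) := Real.rpow_pos_of_pos hs0 _
      field_simp
    calc C / L1M * s ^ (μ-1) = C / (L1M * s ^ (1-μ)) := heq.symm
      _ ≤ E1 α₀ a Lstar Nstar f s / (s * Lstar f s) :=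
          div_le_div₀ (Real.exp_pos _).le (hE1 s hs).1 hdpos hden
  -- integrate
  have hintF : IntervalIntegrable (fun s => E1 α₀ a Lstar Nstar f s / (s * Lstar f s)) volume 0 η :=
    hint2 η ⟨hη0.le, hηα⟩
  have hintub : IntervalIntegrable (fun s : ℝ => s ^ (μ-1) / L1m) volume 0 η :=
    (intervalIntegral.intervalIntegrable_rpow' (by linarith)).div_const _
  have hintlb : IntervalIntegrable (fun s : ℝ => C / L1M * s ^ (μ-1)) volume 0 η :=
    (intervalIntegral.intervalIntegrable_rpow' (by linarith)).const_mul _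
  constructor
  · have h1 := int_mono_Ioc hη0.le hintlb hintF hlb
    have h2 : ∫ s in (0:ℝ)..η, C / L1M * s ^ (μ-1) = C * η ^ μ / (L1M * μ) := by
      rw [intervalIntegral.integral_const_mul, integral_rpow0 (by linarith),
        show μ - 1 + 1 = μ by ring]
      field_simp
    calc C * η ^ μ / (L1M * μ) = ∫ s in (0:ℝ)..η, C / L1M * s ^ (μ-1) := h2.symm
      _ ≤ F1 α₀ a Lstar Nstar f η := h1
  · have h1 := int_mono_Ioc hη0.le hintF hintub hub
    have h2 : ∫ s in (0:ℝ)..η, s ^ (μ-1) / L1m = η ^ μ / (L1m * μ) := by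
      rw [intervalIntegral.integral_div, integral_rpow0 (by linarith),
        show μ - 1 + 1 = μ by ring]
      rw [div_div, mul_comm μ L1m]
    calc F1 α₀ a Lstar Nstar f η ≤ ∫ s in (0:ℝ)..η, s ^ (μ-1) / L1m := h1
      _ = η ^ μ / (L1m * μ) := h2
end
end

section
/- For every f ∈ M and every ξ ≥ α₀, the quantity F₂(ξ,f) satisfies the two-sided bound exp(−a·N₂ᴹ/((β−σ−1)·L₂ₘ·α₀^{β−σ−2}))·(α₀^{−β} − ξ^{−β})/(L₂ᴹ·β) ≤ F₂(ξ,f) ≤ (α₀^{−β} − ξ^{−β})/(β·L₂ₘ). -/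
open Real Set Filter MeasureTheory Topology

noncomputable section

/-- Membership in the space `M`: bounded continuous on `[α₀,∞)`, `f(α₀)=0`, `f(∞)=−1`. -/
def MemM (α₀ : ℝ) (f : ℝ → ℝ) : Prop :=
  ContinuousOn f (Ici α₀) ∧ (∃ C : ℝ, ∀ ξ ∈ Ici α₀, |f ξ| ≤ C) ∧
    f α₀ = 0 ∧ Tendsto f atTop (nhds (-1))

/-- `E₂(ξ,f) = exp(−α₀·a·∫_{α₀}^{ξ} N*(f)(s)/L*(f)(s) ds)`. -/
def E2 (α₀ a : ℝ) (Lstar Nstar : (ℝ → ℝ) → ℝ → ℝ) (f : ℝ → ℝ) (ξ : ℝ) : ℝ :=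
  Real.exp (-(α₀ * a * ∫ s in α₀..ξ, Nstar f s / Lstar f s))

/-- `F₂(ξ,f) = ∫_{α₀}^{ξ} E₂(s,f)/(s·L*(f)(s)) ds`. -/
def F2 (α₀ a : ℝ) (Lstar Nstar : (ℝ → ℝ) → ℝ → ℝ) (f : ℝ → ℝ) (ξ : ℝ) : ℝ :=
  ∫ s in α₀..ξ, E2 α₀ a Lstar Nstar f s / (s * Lstar f s)

open intervalIntegral

/-!
Since `N*/L* ≤ (N₂ᴹ/L₂ₘ) s^(σ-β)` with `β - σ > 1`, the inner integral in `E₂` is nonnegative and at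
most its value over all of `[α₀,∞)`, so `exp(-K) ≤ E₂ ≤ 1` with
`K = α₀ a (N₂ᴹ/L₂ₘ) ∫_{α₀}^∞ s^(σ-β) ds = a N₂ᴹ / ((β-σ-1) L₂ₘ α₀^(β-σ-2))`.
The integrand of `F₂` is then squeezed between multiples of `s^(-(β+1))`, whose integral over
`[α₀, ξ]` is `(α₀^(-β) - ξ^(-β))/β`.
-/

theorem integral_rpow_neg_add_one {a b r : ℝ} (ha : 0 < a) (hab : a ≤ b) (hr : r ≠ 0) :
    ∫ x in a..b, x ^ (-(r + 1)) = (a ^ (-r) - b ^ (-r)) / r := by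
  have hr' : -(r + 1) ≠ -1 := by contrapose! hr; linarith
  rw [integral_rpow (Or.inr ⟨hr', notMem_uIcc_of_lt ha (ha.trans_le hab)⟩), neg_add,
    neg_add_cancel_right, div_neg, ← neg_div, neg_sub]

theorem intervalIntegrable_rpow_of_pos {a b r : ℝ} (ha : 0 < a) (hab : a ≤ b) :
    IntervalIntegrable (fun x => x ^ r) volume a b :=
  intervalIntegrable_rpow (Or.inr (notMem_uIcc_of_lt ha (ha.trans_le hab)))

theorem integral_le_of_le_mul_rpow_neg_add_one {g : ℝ → ℝ} {a b r C : ℝ} (ha : 0 < a)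
    (hab : a ≤ b) (hr : 0 < r) (hC : 0 ≤ C) (hg : IntervalIntegrable g volume a b)
    (hgC : ∀ x ∈ Icc a b, g x ≤ C * x ^ (-(r + 1))) :
    ∫ x in a..b, g x ≤ C * (a ^ (-r) / r) := by
  calc ∫ x in a..b, g x ≤ ∫ x in a..b, C * x ^ (-(r + 1)) :=
        integral_mono_on hab hg ((intervalIntegrable_rpow_of_pos ha hab).const_mul C) hgC
    _ = C * ((a ^ (-r) - b ^ (-r)) / r) := by
        rw [intervalIntegral.integral_const_mul, integral_rpow_neg_add_one ha hab hr.ne']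
    _ ≤ C * (a ^ (-r) / r) := by
        gcongr
        exact sub_le_self _ (rpow_nonneg (ha.le.trans hab) _)

theorem inv_mul_rpow_self {s : ℝ} (hs : 0 < s) (β : ℝ) : (s * s ^ β)⁻¹ = s ^ (-(β + 1)) := by
  rw [rpow_neg hs.le, rpow_add_one hs.ne', mul_comm]

theorem inv_mul_le_of_mul_rpow_le {s ℓ m β : ℝ} (hs : 0 < s) (hm : 0 < m)
    (hℓ : m * s ^ β ≤ ℓ) : (s * ℓ)⁻¹ ≤ m⁻¹ * s ^ (-(β + 1)) := by
  rw [← inv_mul_rpow_self hs, ← mul_inv]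
  apply inv_anti₀ (by positivity)
  calc m * (s * s ^ β) = s * (m * s ^ β) := by ring
    _ ≤ s * ℓ := by gcongr

theorem inv_mul_rpow_le_of_le_mul_rpow {s ℓ M β : ℝ} (hs : 0 < s) (hℓ₀ : 0 < ℓ)
    (hℓ : ℓ ≤ M * s ^ β) : M⁻¹ * s ^ (-(β + 1)) ≤ (s * ℓ)⁻¹ := by
  rw [← inv_mul_rpow_self hs, ← mul_inv]
  apply inv_anti₀ (by positivity)
  calc s * ℓ ≤ s * (M * s ^ β) := by gcongr
    _ = M * (s * s ^ β) := by ring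

section Squeeze

variable {E ℓ : ℝ → ℝ} {a b β : ℝ}

theorem integral_div_mul_le {m : ℝ} (ha : 0 < a) (hab : a ≤ b) (hβ : β ≠ 0) (hm : 0 < m)
    (hint : IntervalIntegrable (fun s => E s / (s * ℓ s)) volume a b)
    (hE : ∀ s ∈ Icc a b, E s ≤ 1) (hℓ : ∀ s ∈ Icc a b, m * s ^ β ≤ ℓ s) :
    ∫ s in a..b, E s / (s * ℓ s) ≤ (a ^ (-β) - b ^ (-β)) / (β * m) := by
  have hpoint : ∀ s ∈ Icc a b, E s / (s * ℓ s) ≤ m⁻¹ * s ^ (-(β + 1)) := by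
    intro s hs
    have hs₀ : 0 < s := ha.trans_le hs.1
    have hsℓ : 0 < s * ℓ s := mul_pos hs₀ ((by positivity : 0 < m * s ^ β).trans_le (hℓ s hs))
    calc E s / (s * ℓ s) ≤ 1 / (s * ℓ s) := div_le_div_of_nonneg_right (hE s hs) hsℓ.le
      _ ≤ m⁻¹ * s ^ (-(β + 1)) := by
        rw [one_div]; exact inv_mul_le_of_mul_rpow_le hs₀ hm (hℓ s hs)
  calc ∫ s in a..b, E s / (s * ℓ s) ≤ ∫ s in a..b, m⁻¹ * s ^ (-(β + 1)) :=
        integral_mono_on hab hint ((intervalIntegrable_rpow_of_pos ha hab).const_mul _) hpoint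
    _ = (a ^ (-β) - b ^ (-β)) / (β * m) := by
        rw [intervalIntegral.integral_const_mul, integral_rpow_neg_add_one ha hab hβ]
        field_simp

theorem le_integral_div_mul {c M : ℝ} (ha : 0 < a) (hab : a ≤ b) (hβ : β ≠ 0) (hc : 0 ≤ c)
    (hint : IntervalIntegrable (fun s => E s / (s * ℓ s)) volume a b)
    (hE : ∀ s ∈ Icc a b, c ≤ E s) (hℓ₀ : ∀ s ∈ Icc a b, 0 < ℓ s)
    (hℓ : ∀ s ∈ Icc a b, ℓ s ≤ M * s ^ β) :
    c * (a ^ (-β) - b ^ (-β)) / (M * β) ≤ ∫ s in a..b, E s / (s * ℓ s) := by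
  have hpoint : ∀ s ∈ Icc a b, c * M⁻¹ * s ^ (-(β + 1)) ≤ E s / (s * ℓ s) := by
    intro s hs
    have hs₀ : 0 < s := ha.trans_le hs.1
    calc c * M⁻¹ * s ^ (-(β + 1)) = c * (M⁻¹ * s ^ (-(β + 1))) := mul_assoc _ _ _
      _ ≤ c * (s * ℓ s)⁻¹ := by
        gcongr; exact inv_mul_rpow_le_of_le_mul_rpow hs₀ (hℓ₀ s hs) (hℓ s hs)
      _ ≤ E s / (s * ℓ s) := by
        rw [← div_eq_mul_inv]
        exact div_le_div_of_nonneg_right (hE s hs) (mul_pos hs₀ (hℓ₀ s hs)).le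
  calc c * (a ^ (-β) - b ^ (-β)) / (M * β) = ∫ s in a..b, c * M⁻¹ * s ^ (-(β + 1)) := by
        rw [intervalIntegral.integral_const_mul, integral_rpow_neg_add_one ha hab hβ]
        field_simp
    _ ≤ ∫ s in a..b, E s / (s * ℓ s) := integral_mono_on hab ((intervalIntegrable_rpow_of_pos ha hab).const_mul _) hint hpoint

end Squeeze

section E2

variable {α₀ a s : ℝ} {Lstar Nstar : (ℝ → ℝ) → ℝ → ℝ} {f : ℝ → ℝ}

theorem E2_le_one (hα₀ : 0 ≤ α₀) (ha : 0 ≤ a) (hs : α₀ ≤ s)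
    (hNL : ∀ t ∈ Icc α₀ s, 0 ≤ Nstar f t / Lstar f t) : E2 α₀ a Lstar Nstar f s ≤ 1 := by
  rw [E2, exp_le_one_iff, neg_nonpos]
  exact mul_nonneg (mul_nonneg hα₀ ha) (integral_nonneg hs hNL)

theorem exp_neg_le_E2 {β σ L2m N2M : ℝ} (hα₀ : 0 < α₀) (ha : 0 ≤ a) (hβ : σ + 2 < β)
    (hL2m : 0 < L2m) (hN2M : 0 ≤ N2M) (hs : α₀ ≤ s)
    (hint : IntervalIntegrable (fun t => Nstar f t / Lstar f t) volume α₀ s)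
    (hL : ∀ t ∈ Icc α₀ s, L2m * t ^ β ≤ Lstar f t)
    (hN : ∀ t ∈ Icc α₀ s, Nstar f t ≤ N2M * t ^ σ) :
    exp (-(a * N2M / ((β - σ - 1) * L2m * α₀ ^ (β - σ - 2)))) ≤ E2 α₀ a Lstar Nstar f s := by
  have hr : 0 < β - σ - 1 := by linarith
  have hratio : ∀ t ∈ Icc α₀ s,
      Nstar f t / Lstar f t ≤ N2M / L2m * t ^ (-(β - σ - 1 + 1)) := by
    intro t ht
    have ht₀ : 0 < t := hα₀.trans_le ht.1
    calc Nstar f t / Lstar f t ≤ N2M * t ^ σ / (L2m * t ^ β) :=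
          div_le_div₀ (by positivity) (hN t ht) (by positivity) (hL t ht)
      _ = N2M / L2m * t ^ (-(β - σ - 1 + 1)) := by
          rw [show -(β - σ - 1 + 1) = σ - β by ring, rpow_sub ht₀, div_mul_div_comm]
  have hbound := integral_le_of_le_mul_rpow_neg_add_one hα₀ hs hr (by positivity) hint hratio
  have hpow : α₀ * α₀ ^ (-(β - σ - 1)) = (α₀ ^ (β - σ - 2))⁻¹ := by
    rw [← rpow_neg hα₀.le, mul_comm, ← rpow_add_one hα₀.ne']
    ring_nf
  have hK : α₀ * a * (N2M / L2m * (α₀ ^ (-(β - σ - 1)) / (β - σ - 1)))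
      = a * N2M / ((β - σ - 1) * L2m * α₀ ^ (β - σ - 2)) := by
    rw [show α₀ * a * (N2M / L2m * (α₀ ^ (-(β - σ - 1)) / (β - σ - 1)))
        = a * N2M / ((β - σ - 1) * L2m) * (α₀ * α₀ ^ (-(β - σ - 1))) by field_simp,
      hpow, ← div_eq_mul_inv, div_div]
  rw [E2, exp_le_exp, neg_le_neg_iff, ← hK]
  exact mul_le_mul_of_nonneg_left hbound (by positivity)

theorem continuousOn_E2 {b : ℝ} (hb : α₀ ≤ b)
    (hint : IntegrableOn (fun t => Nstar f t / Lstar f t) (Icc α₀ b)) :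
    ContinuousOn (E2 α₀ a Lstar Nstar f) (Icc α₀ b) := by
  have hprim := continuousOn_primitive_interval (μ := volume) (by rwa [uIcc_of_le hb])
  rw [uIcc_of_le hb] at hprim
  exact (continuousOn_const.mul hprim).neg.rexp

end E2

theorem statement3_general
    (α₀ a β σ L2m L2M N2m N2M : ℝ)
    (hα₀ : 0 < α₀) (ha : 0 < a)
    (hβpos : 0 < β) (hL2m : 0 < L2m)
    (hN2m : 0 < N2m) (hN2M : 0 < N2M)
    (hβ : σ + 2 < β)
    (Lstar Nstar : (ℝ → ℝ) → ℝ → ℝ)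
    (hLcont : ∀ f : ℝ → ℝ, MemM α₀ f → ContinuousOn (Lstar f) (Ici α₀))
    (hNcont : ∀ f : ℝ → ℝ, MemM α₀ f → ContinuousOn (Nstar f) (Ici α₀))
    (hLbd : ∀ f : ℝ → ℝ, MemM α₀ f → ∀ ξ ∈ Ici α₀,
      L2m * ξ ^ β ≤ Lstar f ξ ∧ Lstar f ξ ≤ L2M * ξ ^ β)
    (hNbd : ∀ f : ℝ → ℝ, MemM α₀ f → ∀ ξ ∈ Ici α₀,
      N2m * ξ ^ σ ≤ Nstar f ξ ∧ Nstar f ξ ≤ N2M * ξ ^ σ)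
    (f : ℝ → ℝ) (hf : MemM α₀ f)
    (ξ : ℝ) (hξ : α₀ ≤ ξ) :
    Real.exp (-(a * N2M / ((β - σ - 1) * L2m * α₀ ^ (β - σ - 2)))) *
        (α₀ ^ (-β) - ξ ^ (-β)) / (L2M * β) ≤ F2 α₀ a Lstar Nstar f ξ ∧
      F2 α₀ a Lstar Nstar f ξ ≤ (α₀ ^ (-β) - ξ ^ (-β)) / (β * L2m) := by
  have hL := hLbd f hf
  have hN := hNbd f hf
  have hLpos : ∀ s ∈ Ici α₀, 0 < Lstar f s := fun s hs =>
    (mul_pos hL2m (rpow_pos_of_pos (hα₀.trans_le hs) β)).trans_le (hL s hs).1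
  have hNpos : ∀ s ∈ Ici α₀, 0 < Nstar f s := fun s hs =>
    (mul_pos hN2m (rpow_pos_of_pos (hα₀.trans_le hs) σ)).trans_le (hN s hs).1
  have hNL : ContinuousOn (fun s => Nstar f s / Lstar f s) (Ici α₀) :=
    (hNcont f hf).div (hLcont f hf) fun s hs => (hLpos s hs).ne'
  have hE2_le : ∀ s ∈ Icc α₀ ξ, E2 α₀ a Lstar Nstar f s ≤ 1 := fun s hs =>
    E2_le_one hα₀.le ha.le hs.1 fun t ht => (div_pos (hNpos t ht.1) (hLpos t ht.1)).le
  have hle_E2 : ∀ s ∈ Icc α₀ ξ, exp (-(a * N2M / ((β - σ - 1) * L2m * α₀ ^ (β - σ - 2)))) ≤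
      E2 α₀ a Lstar Nstar f s := fun s hs =>
    exp_neg_le_E2 hα₀ ha.le hβ hL2m hN2M.le hs.1
      ((hNL.mono Icc_subset_Ici_self).intervalIntegrable_of_Icc hs.1) (fun t ht => (hL t ht.1).1)
      (fun t ht => (hN t ht.1).2)
  have hint : IntervalIntegrable (fun s => E2 α₀ a Lstar Nstar f s / (s * Lstar f s))
      volume α₀ ξ :=
    ContinuousOn.intervalIntegrable_of_Icc hξ <|
      (continuousOn_E2 hξ (hNL.mono Icc_subset_Ici_self).integrableOn_Icc).div
        (continuousOn_id.mul ((hLcont f hf).mono Icc_subset_Ici_self))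
        fun s hs => (mul_pos (hα₀.trans_le hs.1) (hLpos s hs.1)).ne'
  exact ⟨le_integral_div_mul hα₀ hξ hβpos.ne' (exp_pos _).le hint hle_E2
      (fun s hs => hLpos s hs.1) (fun s hs => (hL s hs.1).2),
    integral_div_mul_le hα₀ hξ hβpos.ne' hL2m hint hE2_le (fun s hs => (hL s hs.1).1)⟩

theorem statement3
    (α₀ a β σ L2m L2M N2m N2M : ℝ)
    (hα₀ : 0 < α₀) (ha : 0 < a)
    (hβpos : 0 < β) (hσpos : 0 < σ) (hL2m : 0 < L2m) (hL2M : 0 < L2M)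
    (hN2m : 0 < N2m) (hN2M : 0 < N2M)
    (hβ : σ + 2 < β) (hLmM : L2m ≤ L2M) (hNmM : N2m ≤ N2M)
    (Lstar Nstar : (ℝ → ℝ) → ℝ → ℝ)
    (hLcont : ∀ f : ℝ → ℝ, MemM α₀ f → ContinuousOn (Lstar f) (Ici α₀))
    (hNcont : ∀ f : ℝ → ℝ, MemM α₀ f → ContinuousOn (Nstar f) (Ici α₀))
    (hLbd : ∀ f : ℝ → ℝ, MemM α₀ f → ∀ ξ ∈ Ici α₀,
      L2m * ξ ^ β ≤ Lstar f ξ ∧ Lstar f ξ ≤ L2M * ξ ^ β)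
    (hNbd : ∀ f : ℝ → ℝ, MemM α₀ f → ∀ ξ ∈ Ici α₀,
      N2m * ξ ^ σ ≤ Nstar f ξ ∧ Nstar f ξ ≤ N2M * ξ ^ σ)
    (f : ℝ → ℝ) (hf : MemM α₀ f)
    (ξ : ℝ) (hξ : α₀ ≤ ξ) :
    Real.exp (-(a * N2M / ((β - σ - 1) * L2m * α₀ ^ (β - σ - 2)))) *
        (α₀ ^ (-β) - ξ ^ (-β)) / (L2M * β) ≤ F2 α₀ a Lstar Nstar f ξ ∧
      F2 α₀ a Lstar Nstar f ξ ≤ (α₀ ^ (-β) - ξ ^ (-β)) / (β * L2m) :=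
  statement3_general α₀ a β σ L2m L2M N2m N2M hα₀ ha hβpos hL2m hN2m hN2M hβ Lstar Nstar hLcont
    hNcont hLbd hNbd f hf ξ hξ
end
end

section
/- For all f, f* ∈ C[0,α₀] and all η ∈ [0,α₀], one has |E₁(η,f) − E₁(η,f*)| ≤ Ē₁(α₀)·‖f − f*‖, where Ē₁(α₀) = (α₀·a/L₁ₘ)·(N̄₁·α₀^{μ+1}/(μ+1) + L̄₁·N₁ᴹ·α₀^{2μ−ν+1}/(L₁ₘ·(2μ−ν+1))). -/
open Real Set Filter MeasureTheory Topology

noncomputable section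

/-- Sup norm on `C[0,α₀]`. -/
def supIcc (α₀ : ℝ) (g : ℝ → ℝ) : ℝ := ⨆ η : Icc (0:ℝ) α₀, |g η.1|

/-!
Since `exp` is `1`-Lipschitz on `(-∞, 0]` and both integrals are nonnegative, it suffices to
bound the difference of the integrals of `N*(f)/L*(f)` and `N*(f*)/L*(f*)`. Writing
`n/l - n'/l' = (n - n')/l + n'(l' - l)/(l l')`, the two-sided power bounds on `L*` and `N*` and
their Lipschitz bounds give the pointwise estimate
`(N̄₁‖f - f*‖/L₁ₘ) s^μ + (L̄₁N₁ᴹ‖f - f*‖/L₁ₘ²) s^(2μ-ν)`, which is integrable near `0` because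
`μ > ν`; integrating it from `0` to `η ≤ α₀` gives the constant `Ē₁(α₀)`.
-/

lemma abs_exp_sub_exp_le_of_nonpos {u v : ℝ} (hu : u ≤ 0) (hv : v ≤ 0) :
    |exp u - exp v| ≤ |u - v| := by
  wlog h : v ≤ u generalizing u v
  · rw [abs_sub_comm, abs_sub_comm u v]
    exact this hv hu (le_of_not_ge h)
  rw [abs_of_nonneg (sub_nonneg.2 (exp_le_exp.2 h)), abs_of_nonneg (sub_nonneg.2 h)]
  have hexp_v : exp v = exp u * exp (v - u) := by rw [← exp_add]; ring_nf
  nlinarith [add_one_le_exp (v - u), exp_le_one_iff.2 hu, exp_pos u, exp_pos (v - u)]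

lemma abs_exp_neg_mul_sub_exp_neg_mul_le {k x y : ℝ} (hk : 0 ≤ k) (hx : 0 ≤ x) (hy : 0 ≤ y) :
    |exp (-(k * x)) - exp (-(k * y))| ≤ k * |x - y| :=
  calc |exp (-(k * x)) - exp (-(k * y))|
      ≤ |-(k * x) - -(k * y)| :=
        abs_exp_sub_exp_le_of_nonpos (by nlinarith) (by nlinarith)
    _ = k * |x - y| := by
        rw [show -(k * x) - -(k * y) = k * (y - x) by ring, abs_mul, abs_of_nonneg hk,
          abs_sub_comm]

lemma abs_div_sub_div_le {n n' l l' m N δn δl : ℝ} (hm : 0 < m) (hl : m ≤ l) (hl' : m ≤ l')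
    (hn' : 0 ≤ n') (hn'N : n' ≤ N) (hδn : |n - n'| ≤ δn) (hδl : |l - l'| ≤ δl) :
    |n / l - n' / l'| ≤ δn / m + N * δl / m ^ 2 := by
  have hl0 : 0 < l := hm.trans_le hl
  have hl'0 : 0 < l' := hm.trans_le hl'
  have hsplit : n / l - n' / l' = (n - n') / l + n' * (l' - l) / (l * l') := by
    field_simp
    ring
  rw [hsplit]
  refine (abs_add_le _ _).trans (add_le_add ?_ ?_)
  · rw [abs_div, abs_of_pos hl0]
    exact div_le_div₀ ((abs_nonneg _).trans hδn) hδn hm hl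
  · rw [abs_div, abs_mul, abs_of_nonneg hn', abs_of_pos (mul_pos hl0 hl'0), abs_sub_comm, sq]
    exact div_le_div₀ (mul_nonneg (hn'.trans hn'N) ((abs_nonneg _).trans hδl))
      (mul_le_mul hn'N hδl (abs_nonneg _) (hn'.trans hn'N)) (mul_pos hm hm)
      (mul_le_mul hl hl' hm.le hl0.le)

lemma abs_div_sub_div_le_of_rpow_bounds {n n' l l' s μ ν m N δn δl : ℝ} (hs : 0 < s)
    (hm : 0 < m) (hl : m * s ^ (-μ) ≤ l) (hl' : m * s ^ (-μ) ≤ l') (hn' : 0 ≤ n')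
    (hn'N : n' ≤ N * s ^ (-ν)) (hδn : |n - n'| ≤ δn) (hδl : |l - l'| ≤ δl) :
    |n / l - n' / l'| ≤ δn / m * s ^ μ + N * δl / m ^ 2 * s ^ (2 * μ - ν) := by
  refine (abs_div_sub_div_le (by positivity) hl hl' hn' hn'N hδn hδl).trans_eq ?_
  have hsμ : 0 < s ^ μ := rpow_pos_of_pos hs μ
  rw [rpow_neg hs.le, rpow_neg hs.le, show 2 * μ - ν = μ + μ - ν by ring, rpow_sub hs,
    rpow_add hs]
  field_simp

lemma intervalIntegral_nonneg_of_nonneg_on_Ioc {F : ℝ → ℝ} {η : ℝ} (hη : 0 ≤ η)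
    (hF : ∀ s ∈ Ioc 0 η, 0 ≤ F s) : 0 ≤ ∫ s in (0 : ℝ)..η, F s := by
  refine intervalIntegral.integral_nonneg_of_ae_restrict hη ?_
  rw [Measure.restrict_congr_set Ioc_ae_eq_Icc.symm]
  exact ae_restrict_of_forall_mem measurableSet_Ioc hF

lemma intervalIntegral_rpow_le {η α p : ℝ} (hη : 0 ≤ η) (hηα : η ≤ α) (hp : -1 < p) :
    ∫ s in (0 : ℝ)..η, s ^ p ≤ α ^ (p + 1) / (p + 1) := by
  have hp1 : 0 < p + 1 := by linarith
  rw [integral_rpow (Or.inl hp), zero_rpow hp1.ne', sub_zero]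
  exact div_le_div_of_nonneg_right (rpow_le_rpow hη hηα hp1.le) hp1.le

lemma abs_intervalIntegral_le_of_abs_le_rpow_add_rpow {H : ℝ → ℝ} {η α c₁ c₂ p q : ℝ}
    (hη : 0 ≤ η) (hηα : η ≤ α) (hp : -1 < p) (hq : -1 < q) (hc₁ : 0 ≤ c₁) (hc₂ : 0 ≤ c₂)
    (hH : ∀ s ∈ Ioc 0 η, |H s| ≤ c₁ * s ^ p + c₂ * s ^ q) :
    |∫ s in (0 : ℝ)..η, H s| ≤ c₁ * (α ^ (p + 1) / (p + 1)) + c₂ * (α ^ (q + 1) / (q + 1)) := by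
  have hint_p : IntervalIntegrable (fun s : ℝ => s ^ p) volume 0 η :=
    intervalIntegral.intervalIntegrable_rpow' hp
  have hint_q : IntervalIntegrable (fun s : ℝ => s ^ q) volume 0 η :=
    intervalIntegral.intervalIntegrable_rpow' hq
  calc |∫ s in (0 : ℝ)..η, H s|
      ≤ ∫ s in (0 : ℝ)..η, (c₁ * s ^ p + c₂ * s ^ q) :=
        intervalIntegral.norm_integral_le_of_norm_le hη
          (Eventually.of_forall fun s hs => (Real.norm_eq_abs (H s)).trans_le (hH s hs))
          ((hint_p.const_mul c₁).add (hint_q.const_mul c₂))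
    _ = c₁ * (∫ s in (0 : ℝ)..η, s ^ p) + c₂ * ∫ s in (0 : ℝ)..η, s ^ q := by
        rw [intervalIntegral.integral_add (hint_p.const_mul c₁) (hint_q.const_mul c₂),
          intervalIntegral.integral_const_mul, intervalIntegral.integral_const_mul]
    _ ≤ c₁ * (α ^ (p + 1) / (p + 1)) + c₂ * (α ^ (q + 1) / (q + 1)) := by
        gcongr
        · exact intervalIntegral_rpow_le hη hηα hp
        · exact intervalIntegral_rpow_le hη hηα hq

theorem statement4_general
    (α₀ a μ ν L1m L1M N1m N1M Lbar1 Nbar1 : ℝ)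
    (hα₀ : 0 < α₀) (ha : 0 < a)
    (hL1m : 0 < L1m)
    (hN1m : 0 < N1m) (hN1M : 0 < N1M) (hLbar1 : 0 < Lbar1) (hNbar1 : 0 < Nbar1)
    (hμ : max 1 ν < μ)
    (Lstar Nstar : (ℝ → ℝ) → ℝ → ℝ)
    (hLbd : ∀ f : ℝ → ℝ, ContinuousOn f (Icc 0 α₀) → ∀ η ∈ Ioc (0:ℝ) α₀,
      L1m * η ^ (-μ) ≤ Lstar f η ∧ Lstar f η ≤ L1M * η ^ (-μ))
    (hNbd : ∀ f : ℝ → ℝ, ContinuousOn f (Icc 0 α₀) → ∀ η ∈ Ioc (0:ℝ) α₀,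
      N1m * η ^ (-ν) ≤ Nstar f η ∧ Nstar f η ≤ N1M * η ^ (-ν))
    (hLlip : ∀ f fs : ℝ → ℝ, ContinuousOn f (Icc 0 α₀) → ContinuousOn fs (Icc 0 α₀) →
      ∀ η ∈ Ioc (0:ℝ) α₀,
        |Lstar f η - Lstar fs η| ≤ Lbar1 * supIcc α₀ (fun x => f x - fs x))
    (hNlip : ∀ f fs : ℝ → ℝ, ContinuousOn f (Icc 0 α₀) → ContinuousOn fs (Icc 0 α₀) →
      ∀ η ∈ Ioc (0:ℝ) α₀,
        |Nstar f η - Nstar fs η| ≤ Nbar1 * supIcc α₀ (fun x => f x - fs x))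
    (hint : ∀ f : ℝ → ℝ, ContinuousOn f (Icc 0 α₀) → ∀ η ∈ Icc (0:ℝ) α₀,
      IntervalIntegrable (fun s => Nstar f s / Lstar f s) volume 0 η)
    (f fs : ℝ → ℝ) (hf : ContinuousOn f (Icc 0 α₀)) (hfs : ContinuousOn fs (Icc 0 α₀))
    (η : ℝ) (hη : η ∈ Icc (0:ℝ) α₀) :
    |E1 α₀ a Lstar Nstar f η - E1 α₀ a Lstar Nstar fs η| ≤
      (α₀ * a / L1m) * (Nbar1 * α₀ ^ (μ + 1) / (μ + 1) +
          Lbar1 * N1M * α₀ ^ (2 * μ - ν + 1) / (L1m * (2 * μ - ν + 1))) *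
        supIcc α₀ (fun x => f x - fs x) := by
  obtain ⟨hη0, hηα⟩ := hη
  set d := supIcc α₀ (fun x => f x - fs x)
  have hd : 0 ≤ d := Real.iSup_nonneg fun _ => abs_nonneg _
  have hνμ : ν < μ := (le_max_right _ _).trans_lt hμ
  have hμ1 : 1 < μ := (le_max_left _ _).trans_lt hμ
  have hIoc : ∀ s ∈ Ioc 0 η, s ∈ Ioc 0 α₀ := fun s hs => ⟨hs.1, hs.2.trans hηα⟩
  have hN_nonneg : ∀ g, ContinuousOn g (Icc 0 α₀) → ∀ s ∈ Ioc 0 η, 0 ≤ Nstar g s :=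
    fun g hg s hs => le_trans (by have := hs.1; positivity) (hNbd g hg s (hIoc s hs)).1
  have hL_pos : ∀ g, ContinuousOn g (Icc 0 α₀) → ∀ s ∈ Ioc 0 η, 0 < Lstar g s :=
    fun g hg s hs => lt_of_lt_of_le (by have := hs.1; positivity) (hLbd g hg s (hIoc s hs)).1
  have hI_nonneg : ∀ g, ContinuousOn g (Icc 0 α₀) →
      0 ≤ ∫ s in (0 : ℝ)..η, Nstar g s / Lstar g s := fun g hg =>
    intervalIntegral_nonneg_of_nonneg_on_Ioc hη0 fun s hs =>
      div_nonneg (hN_nonneg g hg s hs) (hL_pos g hg s hs).le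
  have hpointwise : ∀ s ∈ Ioc 0 η,
      |Nstar f s / Lstar f s - Nstar fs s / Lstar fs s| ≤
        Nbar1 * d / L1m * s ^ μ + N1M * (Lbar1 * d) / L1m ^ 2 * s ^ (2 * μ - ν) :=
    fun s hs => abs_div_sub_div_le_of_rpow_bounds hs.1 hL1m (hLbd f hf s (hIoc s hs)).1
      (hLbd fs hfs s (hIoc s hs)).1 (hN_nonneg fs hfs s hs) (hNbd fs hfs s (hIoc s hs)).2
      (hNlip f fs hf hfs s (hIoc s hs)) (hLlip f fs hf hfs s (hIoc s hs))
  have hintegral := abs_intervalIntegral_le_of_abs_le_rpow_add_rpow hη0 hηα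
    (by linarith : (-1 : ℝ) < μ) (by linarith : (-1 : ℝ) < 2 * μ - ν)
    (by positivity) (by positivity) hpointwise
  rw [intervalIntegral.integral_sub (hint f hf η ⟨hη0, hηα⟩) (hint fs hfs η ⟨hη0, hηα⟩)]
    at hintegral
  calc |E1 α₀ a Lstar Nstar f η - E1 α₀ a Lstar Nstar fs η|
      ≤ α₀ * a * |(∫ s in (0 : ℝ)..η, Nstar f s / Lstar f s) -
          ∫ s in (0 : ℝ)..η, Nstar fs s / Lstar fs s| :=
        abs_exp_neg_mul_sub_exp_neg_mul_le (by positivity) (hI_nonneg f hf) (hI_nonneg fs hfs)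
    _ ≤ α₀ * a * (Nbar1 * d / L1m * (α₀ ^ (μ + 1) / (μ + 1)) +
          N1M * (Lbar1 * d) / L1m ^ 2 * (α₀ ^ (2 * μ - ν + 1) / (2 * μ - ν + 1))) := by
        gcongr
    _ = (α₀ * a / L1m) * (Nbar1 * α₀ ^ (μ + 1) / (μ + 1) +
          Lbar1 * N1M * α₀ ^ (2 * μ - ν + 1) / (L1m * (2 * μ - ν + 1))) * d := by
        field_simp

theorem statement4
    (α₀ a μ ν L1m L1M N1m N1M Lbar1 Nbar1 : ℝ)
    (hα₀ : 0 < α₀) (ha : 0 < a)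
    (hμpos : 0 < μ) (hνpos : 0 < ν) (hL1m : 0 < L1m) (hL1M : 0 < L1M)
    (hN1m : 0 < N1m) (hN1M : 0 < N1M) (hLbar1 : 0 < Lbar1) (hNbar1 : 0 < Nbar1)
    (hμ : max 1 ν < μ) (hLmM : L1m ≤ L1M) (hNmM : N1m ≤ N1M)
    (Lstar Nstar : (ℝ → ℝ) → ℝ → ℝ)
    (hLcont : ∀ f : ℝ → ℝ, ContinuousOn f (Icc 0 α₀) → ContinuousOn (Lstar f) (Ioc 0 α₀))
    (hNcont : ∀ f : ℝ → ℝ, ContinuousOn f (Icc 0 α₀) → ContinuousOn (Nstar f) (Ioc 0 α₀))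
    (hLbd : ∀ f : ℝ → ℝ, ContinuousOn f (Icc 0 α₀) → ∀ η ∈ Ioc (0:ℝ) α₀,
      L1m * η ^ (-μ) ≤ Lstar f η ∧ Lstar f η ≤ L1M * η ^ (-μ))
    (hNbd : ∀ f : ℝ → ℝ, ContinuousOn f (Icc 0 α₀) → ∀ η ∈ Ioc (0:ℝ) α₀,
      N1m * η ^ (-ν) ≤ Nstar f η ∧ Nstar f η ≤ N1M * η ^ (-ν))
    (hLlip : ∀ f fs : ℝ → ℝ, ContinuousOn f (Icc 0 α₀) → ContinuousOn fs (Icc 0 α₀) →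
      ∀ η ∈ Ioc (0:ℝ) α₀,
        |Lstar f η - Lstar fs η| ≤ Lbar1 * supIcc α₀ (fun x => f x - fs x))
    (hNlip : ∀ f fs : ℝ → ℝ, ContinuousOn f (Icc 0 α₀) → ContinuousOn fs (Icc 0 α₀) →
      ∀ η ∈ Ioc (0:ℝ) α₀,
        |Nstar f η - Nstar fs η| ≤ Nbar1 * supIcc α₀ (fun x => f x - fs x))
    (hint : ∀ f : ℝ → ℝ, ContinuousOn f (Icc 0 α₀) → ∀ η ∈ Icc (0:ℝ) α₀,
      IntervalIntegrable (fun s => Nstar f s / Lstar f s) volume 0 η)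
    (f fs : ℝ → ℝ) (hf : ContinuousOn f (Icc 0 α₀)) (hfs : ContinuousOn fs (Icc 0 α₀))
    (η : ℝ) (hη : η ∈ Icc (0:ℝ) α₀) :
    |E1 α₀ a Lstar Nstar f η - E1 α₀ a Lstar Nstar fs η| ≤
      (α₀ * a / L1m) * (Nbar1 * α₀ ^ (μ + 1) / (μ + 1) +
          Lbar1 * N1M * α₀ ^ (2 * μ - ν + 1) / (L1m * (2 * μ - ν + 1))) *
        supIcc α₀ (fun x => f x - fs x) :=
  statement4_general α₀ a μ ν L1m L1M N1m N1M Lbar1 Nbar1 hα₀ ha hL1m hN1m hN1M hLbar1 hNbar1 hμ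
    Lstar Nstar hLbd hNbd hLlip hNlip hint f fs hf hfs η hη
end
end

section
/- For all f, f* ∈ C[0,α₀] and all η ∈ [0,α₀], one has |F₁(η,f) − F₁(η,f*)| ≤ F̄₁(α₀)·‖f − f*‖, where F̄₁(α₀) = (α₀·a/L₁ₘ²)·(N̄₁·α₀^{2μ+1}/((μ+1)(2μ+1)) + L̄₁·N₁ᴹ·α₀^{3μ−ν+1}/(L₁ₘ·(2μ−ν+1)(3μ−ν+1))) + L̄₁·α₀^{2μ}/(2μ·L₁ₘ²). -/
/-!
`E₁` and `F₁` depend on `f` only through `L*(f)` and `N*(f)`, and every difference of quotients is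
controlled by `p/q - p'/q' = (p - p')/q + p'(q' - q)/(q q')` together with `L* ≥ L₁ₘ η^(-μ)`.
This makes `N*/L*` Lipschitz in `f` with weights `η^μ` and `η^(2μ-ν)`. Since `exp (-·)` is
`1`-Lipschitz on `[0, ∞)`, integrating gives a Lipschitz bound for `E₁` with weights `η^(μ+1)` and
`η^(2μ-ν+1)`. The same identity for `E₁/(s L*)`, where `0 < E₁ ≤ 1`, yields integrand weights
`s^(2μ)`, `s^(3μ-ν)` and `s^(2μ-1)`, all integrable at `0`; integrating them over `[0, η]` and
using `η ≤ α₀` produces `F̄₁(α₀)`.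
-/

open Real Set Filter MeasureTheory Topology

noncomputable section

theorem abs_exp_neg_sub_exp_neg_le {x y : ℝ} (hx : 0 ≤ x) (hy : 0 ≤ y) :
    |exp (-x) - exp (-y)| ≤ |x - y| := by
  wlog hxy : y ≤ x generalizing x y
  · rw [abs_sub_comm, abs_sub_comm x]
    exact this hy hx (le_of_not_ge hxy)
  have hd : 0 ≤ x - y := sub_nonneg.2 hxy
  have hsplit : exp (-y) - exp (-x) = exp (-y) * (1 - exp (-(x - y))) := by
    rw [mul_sub, ← exp_add]; ring_nf
  have hgap : 0 ≤ 1 - exp (-(x - y)) := by simpa using hd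
  rw [abs_sub_comm, abs_of_nonneg hd, hsplit, abs_of_nonneg (mul_nonneg (exp_pos _).le hgap)]
  calc exp (-y) * (1 - exp (-(x - y))) ≤ 1 * (x - y) :=
        mul_le_mul (exp_le_one_iff.2 (neg_nonpos.2 hy))
          (by linarith [one_sub_le_exp_neg (x - y)]) hgap zero_le_one
    _ = x - y := one_mul _

theorem abs_div_sub_div_le_s5 {p p' q q' k A B P : ℝ} (hk : 0 < k) (hq : k ≤ q) (hq' : k ≤ q')
    (hp : |p - p'| ≤ A) (hdq : |q - q'| ≤ B) (hP : |p'| ≤ P) :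
    |p / q - p' / q'| ≤ A / k + P * B / k ^ 2 := by
  have hq0 : 0 < q := hk.trans_le hq
  have hq'0 : 0 < q' := hk.trans_le hq'
  have hA : 0 ≤ A := (abs_nonneg _).trans hp
  have hB : 0 ≤ B := (abs_nonneg _).trans hdq
  have hP0 : 0 ≤ P := (abs_nonneg _).trans hP
  have hsplit : p / q - p' / q' = (p - p') / q + p' * (q' - q) / (q * q') := by
    field_simp; ring
  rw [hsplit]
  calc _ ≤ |(p - p') / q| + |p' * (q' - q) / (q * q')| := abs_add_le _ _
    _ ≤ A / k + P * B / (k * k) := by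
        rw [abs_div, abs_div, abs_mul, abs_of_pos hq0, abs_of_pos (mul_pos hq0 hq'0),
          abs_sub_comm q']
        gcongr
    _ = _ := by ring

theorem intervalIntegral_nonneg_of_forall_Ioc {g : ℝ → ℝ} {a b : ℝ} (hab : a ≤ b)
    (hg : ∀ t ∈ Ioc a b, 0 ≤ g t) : 0 ≤ ∫ t in a..b, g t := by
  rw [intervalIntegral.integral_of_le hab]
  exact setIntegral_nonneg measurableSet_Ioc hg

theorem abs_intervalIntegral_le_sum_rpow {ι : Type*} (S : Finset ι) {c r : ι → ℝ}
    (hr : ∀ i ∈ S, -1 < r i) {g : ℝ → ℝ} {η : ℝ} (hη : 0 ≤ η)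
    (hg : ∀ t ∈ Ioc 0 η, |g t| ≤ ∑ i ∈ S, c i * t ^ r i) :
    |∫ t in (0:ℝ)..η, g t| ≤ ∑ i ∈ S, c i * (η ^ (r i + 1) / (r i + 1)) := by
  have hint : ∀ i ∈ S, IntervalIntegrable (fun t => c i * t ^ r i) volume 0 η :=
    fun i hi => (intervalIntegral.intervalIntegrable_rpow' (hr i hi)).const_mul _
  calc |∫ t in (0:ℝ)..η, g t| ≤ ∫ t in (0:ℝ)..η, ∑ i ∈ S, c i * t ^ r i := by
        rw [← Real.norm_eq_abs]
        exact intervalIntegral.norm_integral_le_of_norm_le hη (ae_of_all _ hg)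
          (by simpa only [Finset.sum_fn] using IntervalIntegrable.sum S hint)
    _ = _ := by
        rw [intervalIntegral.integral_finsetSum hint]
        refine Finset.sum_congr rfl fun i hi => ?_
        rw [intervalIntegral.integral_const_mul, integral_rpow (Or.inl (hr i hi)),
          zero_rpow (by linarith [hr i hi]), sub_zero]

theorem abs_exp_neg_mul_integral_sub_le {g g' : ℝ → ℝ} {c s : ℝ} (hc : 0 ≤ c)
    (hg : IntervalIntegrable g volume 0 s) (hg' : IntervalIntegrable g' volume 0 s)
    (hI : 0 ≤ ∫ t in (0:ℝ)..s, g t) (hI' : 0 ≤ ∫ t in (0:ℝ)..s, g' t) :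
    |exp (-(c * ∫ t in (0:ℝ)..s, g t)) - exp (-(c * ∫ t in (0:ℝ)..s, g' t))| ≤
      c * |∫ t in (0:ℝ)..s, (g t - g' t)| := by
  refine (abs_exp_neg_sub_exp_neg_le (mul_nonneg hc hI) (mul_nonneg hc hI')).trans_eq ?_
  rw [← mul_sub, abs_mul, abs_of_nonneg hc, intervalIntegral.integral_sub hg hg']

theorem abs_div_sub_div_le_rpow {n n' l l' t m M μ ν εN εL : ℝ} (ht : 0 < t) (hm : 0 < m)
    (hl : m * t ^ (-μ) ≤ l) (hl' : m * t ^ (-μ) ≤ l') (hn' : 0 ≤ n') (hn'M : n' ≤ M * t ^ (-ν))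
    (hdn : |n - n'| ≤ εN) (hdl : |l - l'| ≤ εL) :
    |n / l - n' / l'| ≤ εN / m * t ^ μ + M * εL / m ^ 2 * t ^ (2 * μ - ν) := by
  refine (abs_div_sub_div_le_s5 (by positivity) hl hl' hdn hdl
    ((abs_of_nonneg hn').trans_le hn'M)).trans_eq ?_
  rw [two_mul]
  simp only [rpow_add ht, rpow_sub ht, rpow_neg ht.le]
  field_simp

theorem abs_div_mul_sub_div_mul_le_rpow {e e' l l' s m μ ν c₁ c₂ εL : ℝ} (hs : 0 < s)
    (hm : 0 < m) (hl : m * s ^ (-μ) ≤ l) (hl' : m * s ^ (-μ) ≤ l') (he' : 0 ≤ e') (he'1 : e' ≤ 1)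
    (hde : |e - e'| ≤ c₁ * s ^ (μ + 1) + c₂ * s ^ (2 * μ - ν + 1)) (hdl : |l - l'| ≤ εL) :
    |e / (s * l) - e' / (s * l')| ≤
      c₁ / m * s ^ (2 * μ) + c₂ / m * s ^ (3 * μ - ν) + εL / m ^ 2 * s ^ (2 * μ - 1) := by
  have hde_div : |e / s - e' / s| ≤ (c₁ * s ^ (μ + 1) + c₂ * s ^ (2 * μ - ν + 1)) / s := by
    rw [← sub_div, abs_div, abs_of_pos hs]; gcongr
  have he'_div : |e' / s| ≤ 1 / s := by
    rw [abs_of_nonneg (by positivity)]; gcongr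
  rw [← div_div, ← div_div]
  refine (abs_div_sub_div_le_s5 (by positivity) hl hl' hde_div hdl he'_div).trans_eq ?_
  rw [two_mul, show 3 * μ = μ + μ + μ by ring]
  simp only [rpow_add hs, rpow_sub hs, rpow_neg hs.le, rpow_one]
  field_simp

section Lipschitz

variable {α₀ a μ ν m M εL εN : ℝ} {Lstar Nstar : (ℝ → ℝ) → ℝ → ℝ} {f fs : ℝ → ℝ}

theorem integral_div_nonneg_of_rpow_le (hm : 0 < m)
    (hL : ∀ t ∈ Ioc 0 α₀, m * t ^ (-μ) ≤ Lstar f t) (hN : ∀ t ∈ Ioc 0 α₀, 0 ≤ Nstar f t)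
    {s : ℝ} (hs : s ∈ Icc 0 α₀) : 0 ≤ ∫ t in (0:ℝ)..s, Nstar f t / Lstar f t :=
  intervalIntegral_nonneg_of_forall_Ioc hs.1 fun t ht =>
    have ht' : t ∈ Ioc 0 α₀ := Ioc_subset_Ioc_right hs.2 ht
    div_nonneg (hN t ht') ((mul_nonneg hm.le (rpow_nonneg ht.1.le _)).trans (hL t ht'))

theorem E1_le_one (hc : 0 ≤ α₀ * a) (hm : 0 < m)
    (hL : ∀ t ∈ Ioc 0 α₀, m * t ^ (-μ) ≤ Lstar f t) (hN : ∀ t ∈ Ioc 0 α₀, 0 ≤ Nstar f t)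
    {s : ℝ} (hs : s ∈ Icc 0 α₀) : E1 α₀ a Lstar Nstar f s ≤ 1 :=
  exp_le_one_iff.2 (neg_nonpos.2 (mul_nonneg hc (integral_div_nonneg_of_rpow_le hm hL hN hs)))

theorem abs_E1_sub_le (hc : 0 ≤ α₀ * a) (hμ : 0 < μ) (hνμ : ν < μ) (hm : 0 < m)
    (hLf : ∀ t ∈ Ioc 0 α₀, m * t ^ (-μ) ≤ Lstar f t)
    (hLfs : ∀ t ∈ Ioc 0 α₀, m * t ^ (-μ) ≤ Lstar fs t)
    (hNf : ∀ t ∈ Ioc 0 α₀, 0 ≤ Nstar f t) (hNfs : ∀ t ∈ Ioc 0 α₀, 0 ≤ Nstar fs t)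
    (hNfsM : ∀ t ∈ Ioc 0 α₀, Nstar fs t ≤ M * t ^ (-ν))
    (hdL : ∀ t ∈ Ioc 0 α₀, |Lstar f t - Lstar fs t| ≤ εL)
    (hdN : ∀ t ∈ Ioc 0 α₀, |Nstar f t - Nstar fs t| ≤ εN)
    {s : ℝ} (hs : s ∈ Icc 0 α₀)
    (hintf : IntervalIntegrable (fun t => Nstar f t / Lstar f t) volume 0 s)
    (hintfs : IntervalIntegrable (fun t => Nstar fs t / Lstar fs t) volume 0 s) :
    |E1 α₀ a Lstar Nstar f s - E1 α₀ a Lstar Nstar fs s| ≤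
      α₀ * a * (εN / m / (μ + 1)) * s ^ (μ + 1) +
        α₀ * a * (M * εL / m ^ 2 / (2 * μ - ν + 1)) * s ^ (2 * μ - ν + 1) := by
  have hsub : Ioc 0 s ⊆ Ioc 0 α₀ := Ioc_subset_Ioc_right hs.2
  have hintegral := abs_intervalIntegral_le_sum_rpow Finset.univ
    (c := ![εN / m, M * εL / m ^ 2]) (r := ![μ, 2 * μ - ν])
    (by simp only [Finset.mem_univ, forall_const, Fin.forall_fin_two, Matrix.cons_val_zero,
          Matrix.cons_val_one, Matrix.cons_val_fin_one]; constructor <;> linarith) hs.1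
    (g := fun t => Nstar f t / Lstar f t - Nstar fs t / Lstar fs t) fun t ht => by
      simpa only [Fin.sum_univ_two, Matrix.cons_val_zero, Matrix.cons_val_one,
        Matrix.cons_val_fin_one] using abs_div_sub_div_le_rpow ht.1 hm (hLf t (hsub ht))
          (hLfs t (hsub ht)) (hNfs t (hsub ht)) (hNfsM t (hsub ht)) (hdN t (hsub ht))
          (hdL t (hsub ht))
  simp only [Fin.sum_univ_two, Matrix.cons_val_zero, Matrix.cons_val_one,
    Matrix.cons_val_fin_one] at hintegral
  calc _ ≤ α₀ * a * |∫ t in (0:ℝ)..s, (Nstar f t / Lstar f t - Nstar fs t / Lstar fs t)| :=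
        abs_exp_neg_mul_integral_sub_le hc hintf hintfs
          (integral_div_nonneg_of_rpow_le hm hLf hNf hs)
          (integral_div_nonneg_of_rpow_le hm hLfs hNfs hs)
    _ ≤ _ := (mul_le_mul_of_nonneg_left hintegral hc).trans_eq (by ring)

theorem abs_F1_sub_le {c₁ c₂ : ℝ} (hμ : 0 < μ) (hνμ : ν < μ) (hm : 0 < m)
    (hLf : ∀ t ∈ Ioc 0 α₀, m * t ^ (-μ) ≤ Lstar f t)
    (hLfs : ∀ t ∈ Ioc 0 α₀, m * t ^ (-μ) ≤ Lstar fs t)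
    (hdL : ∀ t ∈ Ioc 0 α₀, |Lstar f t - Lstar fs t| ≤ εL)
    (hE : ∀ s ∈ Ioc 0 α₀, |E1 α₀ a Lstar Nstar f s - E1 α₀ a Lstar Nstar fs s| ≤
      c₁ * s ^ (μ + 1) + c₂ * s ^ (2 * μ - ν + 1))
    (hEfs : ∀ s ∈ Ioc 0 α₀, E1 α₀ a Lstar Nstar fs s ≤ 1)
    {η : ℝ} (hη : η ∈ Icc 0 α₀)
    (hFf : IntervalIntegrable (fun s => E1 α₀ a Lstar Nstar f s / (s * Lstar f s)) volume 0 η)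
    (hFfs : IntervalIntegrable (fun s => E1 α₀ a Lstar Nstar fs s / (s * Lstar fs s))
      volume 0 η) :
    |F1 α₀ a Lstar Nstar f η - F1 α₀ a Lstar Nstar fs η| ≤
      c₁ / m * (η ^ (2 * μ + 1) / (2 * μ + 1)) +
        c₂ / m * (η ^ (3 * μ - ν + 1) / (3 * μ - ν + 1)) +
          εL / m ^ 2 * (η ^ (2 * μ) / (2 * μ)) := by
  have hsub : Ioc 0 η ⊆ Ioc 0 α₀ := Ioc_subset_Ioc_right hη.2
  have hintegral := abs_intervalIntegral_le_sum_rpow Finset.univ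
    (c := ![c₁ / m, c₂ / m, εL / m ^ 2]) (r := ![2 * μ, 3 * μ - ν, 2 * μ - 1])
    (by simp only [Finset.mem_univ, forall_const, Fin.forall_fin_succ, Matrix.cons_val_zero,
          Matrix.cons_val_succ, Matrix.cons_val_fin_one]; refine ⟨?_, ?_, ?_⟩ <;> linarith) hη.1
    (g := fun s => E1 α₀ a Lstar Nstar f s / (s * Lstar f s) -
      E1 α₀ a Lstar Nstar fs s / (s * Lstar fs s)) fun s hs => by
      simpa only [Fin.sum_univ_three, Matrix.cons_val_zero, Matrix.cons_val_one,
        Matrix.cons_val] using abs_div_mul_sub_div_mul_le_rpow hs.1 hm (hLf s (hsub hs))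
          (hLfs s (hsub hs)) (e' := E1 α₀ a Lstar Nstar fs s) (exp_pos _).le (hEfs s (hsub hs))
          (hE s (hsub hs)) (hdL s (hsub hs))
  simp only [Fin.sum_univ_three, Matrix.cons_val_zero, Matrix.cons_val_one, Matrix.cons_val,
    sub_add_cancel] at hintegral
  rwa [F1, F1, ← intervalIntegral.integral_sub hFf hFfs]

end Lipschitz

theorem statement5_general
    (α₀ a μ ν L1m L1M N1m N1M Lbar1 Nbar1 : ℝ)
    (hα₀ : 0 < α₀) (ha : 0 < a)
    (hμpos : 0 < μ) (hL1m : 0 < L1m)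
    (hN1m : 0 < N1m) (hN1M : 0 < N1M) (hLbar1 : 0 < Lbar1) (hNbar1 : 0 < Nbar1)
    (hμ : max 1 ν < μ)
    (Lstar Nstar : (ℝ → ℝ) → ℝ → ℝ)
    (hLbd : ∀ f : ℝ → ℝ, ContinuousOn f (Icc 0 α₀) → ∀ η ∈ Ioc (0:ℝ) α₀,
      L1m * η ^ (-μ) ≤ Lstar f η ∧ Lstar f η ≤ L1M * η ^ (-μ))
    (hNbd : ∀ f : ℝ → ℝ, ContinuousOn f (Icc 0 α₀) → ∀ η ∈ Ioc (0:ℝ) α₀,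
      N1m * η ^ (-ν) ≤ Nstar f η ∧ Nstar f η ≤ N1M * η ^ (-ν))
    (hLlip : ∀ f fs : ℝ → ℝ, ContinuousOn f (Icc 0 α₀) → ContinuousOn fs (Icc 0 α₀) →
      ∀ η ∈ Ioc (0:ℝ) α₀,
        |Lstar f η - Lstar fs η| ≤ Lbar1 * supIcc α₀ (fun x => f x - fs x))
    (hNlip : ∀ f fs : ℝ → ℝ, ContinuousOn f (Icc 0 α₀) → ContinuousOn fs (Icc 0 α₀) →
      ∀ η ∈ Ioc (0:ℝ) α₀,
        |Nstar f η - Nstar fs η| ≤ Nbar1 * supIcc α₀ (fun x => f x - fs x))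
    (hint1 : ∀ f : ℝ → ℝ, ContinuousOn f (Icc 0 α₀) → ∀ η ∈ Icc (0:ℝ) α₀,
      IntervalIntegrable (fun s => Nstar f s / Lstar f s) volume 0 η)
    (hint2 : ∀ f : ℝ → ℝ, ContinuousOn f (Icc 0 α₀) → ∀ η ∈ Icc (0:ℝ) α₀,
      IntervalIntegrable (fun s => E1 α₀ a Lstar Nstar f s / (s * Lstar f s)) volume 0 η)
    (f fs : ℝ → ℝ) (hf : ContinuousOn f (Icc 0 α₀)) (hfs : ContinuousOn fs (Icc 0 α₀))
    (η : ℝ) (hη : η ∈ Icc (0:ℝ) α₀) :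
    |F1 α₀ a Lstar Nstar f η - F1 α₀ a Lstar Nstar fs η| ≤
      ((α₀ * a / L1m ^ 2) * (Nbar1 * α₀ ^ (2 * μ + 1) / ((μ + 1) * (2 * μ + 1)) +
            Lbar1 * N1M * α₀ ^ (3 * μ - ν + 1) /
              (L1m * ((2 * μ - ν + 1) * (3 * μ - ν + 1)))) +
          Lbar1 * α₀ ^ (2 * μ) / (2 * μ * L1m ^ 2)) *
        supIcc α₀ (fun x => f x - fs x) := by
  set δ := supIcc α₀ (fun x => f x - fs x)
  have hδ : 0 ≤ δ := Real.iSup_nonneg fun _ => abs_nonneg _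
  have hνμ : ν < μ := (le_max_right _ _).trans_lt hμ
  have hc : 0 ≤ α₀ * a := by positivity
  have hL (g) (hg : ContinuousOn g (Icc 0 α₀)) (t) (ht : t ∈ Ioc 0 α₀) :=
    (hLbd g hg t ht).1
  have hN (g) (hg : ContinuousOn g (Icc 0 α₀)) (t) (ht : t ∈ Ioc 0 α₀) : 0 ≤ Nstar g t :=
    (mul_nonneg hN1m.le (rpow_nonneg ht.1.le _)).trans (hNbd g hg t ht).1
  calc |F1 α₀ a Lstar Nstar f η - F1 α₀ a Lstar Nstar fs η|
      ≤ _ :=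
        abs_F1_sub_le hμpos hνμ hL1m (hL f hf) (hL fs hfs) (hLlip f fs hf hfs)
          (fun s hs => abs_E1_sub_le hc hμpos hνμ hL1m (hL f hf) (hL fs hfs) (hN f hf) (hN fs hfs)
            (fun t ht => (hNbd fs hfs t ht).2) (hLlip f fs hf hfs) (hNlip f fs hf hfs)
            (Ioc_subset_Icc_self hs) (hint1 f hf s (Ioc_subset_Icc_self hs))
            (hint1 fs hfs s (Ioc_subset_Icc_self hs)))
          (fun s hs => E1_le_one hc hL1m (hL fs hfs) (hN fs hfs) (Ioc_subset_Icc_self hs))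
          hη (hint2 f hf η hη) (hint2 fs hfs η hη)
    _ ≤ α₀ * a * (Nbar1 * δ / L1m / (μ + 1)) / L1m * (α₀ ^ (2 * μ + 1) / (2 * μ + 1)) +
          α₀ * a * (N1M * (Lbar1 * δ) / L1m ^ 2 / (2 * μ - ν + 1)) / L1m *
            (α₀ ^ (3 * μ - ν + 1) / (3 * μ - ν + 1)) +
          Lbar1 * δ / L1m ^ 2 * (α₀ ^ (2 * μ) / (2 * μ)) := by
        obtain ⟨hη0, hηα⟩ := hη
        have : 0 < 2 * μ - ν + 1 := by linarith
        have : 0 ≤ 3 * μ - ν + 1 := by linarith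
        gcongr
    _ = _ := by field_simp

theorem statement5
    (α₀ a μ ν L1m L1M N1m N1M Lbar1 Nbar1 : ℝ)
    (hα₀ : 0 < α₀) (ha : 0 < a)
    (hμpos : 0 < μ) (hνpos : 0 < ν) (hL1m : 0 < L1m) (hL1M : 0 < L1M)
    (hN1m : 0 < N1m) (hN1M : 0 < N1M) (hLbar1 : 0 < Lbar1) (hNbar1 : 0 < Nbar1)
    (hμ : max 1 ν < μ) (hLmM : L1m ≤ L1M) (hNmM : N1m ≤ N1M)
    (Lstar Nstar : (ℝ → ℝ) → ℝ → ℝ)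
    (hLcont : ∀ f : ℝ → ℝ, ContinuousOn f (Icc 0 α₀) → ContinuousOn (Lstar f) (Ioc 0 α₀))
    (hNcont : ∀ f : ℝ → ℝ, ContinuousOn f (Icc 0 α₀) → ContinuousOn (Nstar f) (Ioc 0 α₀))
    (hLbd : ∀ f : ℝ → ℝ, ContinuousOn f (Icc 0 α₀) → ∀ η ∈ Ioc (0:ℝ) α₀,
      L1m * η ^ (-μ) ≤ Lstar f η ∧ Lstar f η ≤ L1M * η ^ (-μ))
    (hNbd : ∀ f : ℝ → ℝ, ContinuousOn f (Icc 0 α₀) → ∀ η ∈ Ioc (0:ℝ) α₀,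
      N1m * η ^ (-ν) ≤ Nstar f η ∧ Nstar f η ≤ N1M * η ^ (-ν))
    (hLlip : ∀ f fs : ℝ → ℝ, ContinuousOn f (Icc 0 α₀) → ContinuousOn fs (Icc 0 α₀) →
      ∀ η ∈ Ioc (0:ℝ) α₀,
        |Lstar f η - Lstar fs η| ≤ Lbar1 * supIcc α₀ (fun x => f x - fs x))
    (hNlip : ∀ f fs : ℝ → ℝ, ContinuousOn f (Icc 0 α₀) → ContinuousOn fs (Icc 0 α₀) →
      ∀ η ∈ Ioc (0:ℝ) α₀,
        |Nstar f η - Nstar fs η| ≤ Nbar1 * supIcc α₀ (fun x => f x - fs x))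
    (hint1 : ∀ f : ℝ → ℝ, ContinuousOn f (Icc 0 α₀) → ∀ η ∈ Icc (0:ℝ) α₀,
      IntervalIntegrable (fun s => Nstar f s / Lstar f s) volume 0 η)
    (hint2 : ∀ f : ℝ → ℝ, ContinuousOn f (Icc 0 α₀) → ∀ η ∈ Icc (0:ℝ) α₀,
      IntervalIntegrable (fun s => E1 α₀ a Lstar Nstar f s / (s * Lstar f s)) volume 0 η)
    (f fs : ℝ → ℝ) (hf : ContinuousOn f (Icc 0 α₀)) (hfs : ContinuousOn fs (Icc 0 α₀))
    (η : ℝ) (hη : η ∈ Icc (0:ℝ) α₀) :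
    |F1 α₀ a Lstar Nstar f η - F1 α₀ a Lstar Nstar fs η| ≤
      ((α₀ * a / L1m ^ 2) * (Nbar1 * α₀ ^ (2 * μ + 1) / ((μ + 1) * (2 * μ + 1)) +
            Lbar1 * N1M * α₀ ^ (3 * μ - ν + 1) /
              (L1m * ((2 * μ - ν + 1) * (3 * μ - ν + 1)))) +
          Lbar1 * α₀ ^ (2 * μ) / (2 * μ * L1m ^ 2)) *
        supIcc α₀ (fun x => f x - fs x) :=
  statement5_general α₀ a μ ν L1m L1M N1m N1M Lbar1 Nbar1 hα₀ ha hμpos hL1m hN1m hN1M hLbar1 hNbar1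
    hμ Lstar Nstar hLbd hNbd hLlip hNlip hint1 hint2 f fs hf hfs η hη
end
end

section
/- For all f, f* ∈ M and all ξ ≥ α₀, one has |E₂(ξ,f) − E₂(ξ,f*)| ≤ Ē₂(α₀)·‖f − f*‖, where Ē₂(α₀) = (α₀·a/L₂ₘ)·(N̄₂/((β−1)·α₀^{β−1}) + L̄₂·N₂ᴹ/(L₂ₘ·(2β−σ−1)·α₀^{2β−σ−1})). -/
open Real Set Filter MeasureTheory Topology

noncomputable section

/-- Sup norm on `[α₀,∞)`. -/
def supIci (α₀ : ℝ) (g : ℝ → ℝ) : ℝ := ⨆ ξ : Ici α₀, |g ξ.1|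

/-- `exp` is 1-Lipschitz on the nonpositive reals. -/
lemma abs_exp_sub_exp_le_aux {x y : ℝ} (hx : x ≤ 0) (hy : y ≤ 0) :
    |Real.exp x - Real.exp y| ≤ |x - y| := by
  wlog h : y ≤ x generalizing x y
  · rw [abs_sub_comm, abs_sub_comm x y]
    exact this hy hx (le_of_not_ge h)
  rw [abs_of_nonneg (sub_nonneg.2 (Real.exp_le_exp.2 h)),
    abs_of_nonneg (sub_nonneg.2 h)]
  have h1 : Real.exp x - Real.exp y = Real.exp x * (1 - Real.exp (y - x)) := by
    rw [mul_sub, mul_one, ← Real.exp_add]; ring_nf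
  have hex1 : Real.exp x ≤ 1 := by
    simpa using Real.exp_le_exp.2 hx
  have h2 : 1 - Real.exp (y - x) ≤ x - y := by
    have := Real.add_one_le_exp (y - x); linarith
  have h3 : 0 ≤ 1 - Real.exp (y - x) := by
    have : Real.exp (y - x) ≤ 1 := by simpa using Real.exp_le_exp.2 (by linarith : y - x ≤ 0)
    linarith
  calc Real.exp x - Real.exp y = Real.exp x * (1 - Real.exp (y - x)) := h1
    _ ≤ 1 * (x - y) := mul_le_mul hex1 h2 h3 zero_le_one
    _ = x - y := one_mul _

set_option maxHeartbeats 1000000 in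
theorem statement6
    (α₀ a β σ L2m L2M N2m N2M Lbar2 Nbar2 : ℝ)
    (hα₀ : 0 < α₀) (ha : 0 < a)
    (hβpos : 0 < β) (hσpos : 0 < σ) (hL2m : 0 < L2m) (hL2M : 0 < L2M)
    (hN2m : 0 < N2m) (hN2M : 0 < N2M) (hLbar2 : 0 < Lbar2) (hNbar2 : 0 < Nbar2)
    (hβ : σ + 2 < β) (hLmM : L2m ≤ L2M) (hNmM : N2m ≤ N2M)
    (Lstar Nstar : (ℝ → ℝ) → ℝ → ℝ)
    (hLcont : ∀ f : ℝ → ℝ, MemM α₀ f → ContinuousOn (Lstar f) (Ici α₀))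
    (hNcont : ∀ f : ℝ → ℝ, MemM α₀ f → ContinuousOn (Nstar f) (Ici α₀))
    (hLbd : ∀ f : ℝ → ℝ, MemM α₀ f → ∀ ξ ∈ Ici α₀,
      L2m * ξ ^ β ≤ Lstar f ξ ∧ Lstar f ξ ≤ L2M * ξ ^ β)
    (hNbd : ∀ f : ℝ → ℝ, MemM α₀ f → ∀ ξ ∈ Ici α₀,
      N2m * ξ ^ σ ≤ Nstar f ξ ∧ Nstar f ξ ≤ N2M * ξ ^ σ)
    (hLlip : ∀ f fs : ℝ → ℝ, MemM α₀ f → MemM α₀ fs → ∀ ξ ∈ Ici α₀,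
      |Lstar f ξ - Lstar fs ξ| ≤ Lbar2 * supIci α₀ (fun x => f x - fs x))
    (hNlip : ∀ f fs : ℝ → ℝ, MemM α₀ f → MemM α₀ fs → ∀ ξ ∈ Ici α₀,
      |Nstar f ξ - Nstar fs ξ| ≤ Nbar2 * supIci α₀ (fun x => f x - fs x))
    (f fs : ℝ → ℝ) (hf : MemM α₀ f) (hfs : MemM α₀ fs)
    (ξ : ℝ) (hξ : α₀ ≤ ξ) :
    |E2 α₀ a Lstar Nstar f ξ - E2 α₀ a Lstar Nstar fs ξ| ≤
      (α₀ * a / L2m) * (Nbar2 / ((β - 1) * α₀ ^ (β - 1)) +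
          Lbar2 * N2M / (L2m * (2 * β - σ - 1) * α₀ ^ (2 * β - σ - 1))) *
        supIci α₀ (fun x => f x - fs x) := by
  set D := supIci α₀ (fun x => f x - fs x) with hDdef
  obtain ⟨Cf, hCf⟩ := hf.2.1
  obtain ⟨Cfs, hCfs⟩ := hfs.2.1
  have hDbdd : BddAbove (Set.range fun p : Ici α₀ => |f p.1 - fs p.1|) := by
    refine ⟨Cf + Cfs, ?_⟩
    rintro x ⟨p, rfl⟩
    calc |f p.1 - fs p.1| ≤ |f p.1| + |fs p.1| := abs_sub _ _
      _ ≤ Cf + Cfs := add_le_add (hCf _ p.2) (hCfs _ p.2)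
  have hD0 : 0 ≤ D :=
    le_trans (abs_nonneg (f α₀ - fs α₀)) (le_ciSup hDbdd ⟨α₀, le_refl α₀⟩)
  have hξ0 : 0 < ξ := lt_of_lt_of_le hα₀ hξ
  have huIcc : uIcc α₀ ξ = Icc α₀ ξ := uIcc_of_le hξ
  have hsub : Icc α₀ ξ ⊆ Ici α₀ := Icc_subset_Ici_self
  have hβ1 : (1:ℝ) < β := by linarith
  have h2βσ : (1:ℝ) < 2 * β - σ := by linarith
  -- positivity of the various quantities
  have hLpos : ∀ (g : ℝ → ℝ), MemM α₀ g → ∀ s ∈ Ici α₀, 0 < Lstar g s := by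
    intro g hg s hs
    have hs0 : 0 < s := lt_of_lt_of_le hα₀ hs
    exact lt_of_lt_of_le (mul_pos hL2m (Real.rpow_pos_of_pos hs0 β)) (hLbd g hg s hs).1
  -- continuity / integrability of the integrands
  have hcont : ∀ (g : ℝ → ℝ), MemM α₀ g →
      IntervalIntegrable (fun s => Nstar g s / Lstar g s) volume α₀ ξ := by
    intro g hg
    apply ContinuousOn.intervalIntegrable
    rw [huIcc]
    exact ((hNcont g hg).mono hsub).div ((hLcont g hg).mono hsub)
      (fun s hs => ne_of_gt (hLpos g hg s (hsub hs)))
  have hIf := hcont f hf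
  have hIfs := hcont fs hfs
  -- the dominating function
  set c1 : ℝ := Nbar2 / L2m with hc1
  set c2 : ℝ := Lbar2 * N2M / L2m ^ 2 with hc2
  have hc1pos : 0 < c1 := div_pos hNbar2 hL2m
  have hc2pos : 0 < c2 := div_pos (mul_pos hLbar2 hN2M) (pow_pos hL2m 2)
  set K : ℝ → ℝ := fun s => (c1 * s ^ (-β) + c2 * s ^ (σ - 2 * β)) * D with hK
  -- pointwise bound
  have key : ∀ s ∈ Icc α₀ ξ,
      |Nstar f s / Lstar f s - Nstar fs s / Lstar fs s| ≤ K s := by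
    intro s hs
    have hs0 : 0 < s := lt_of_lt_of_le hα₀ hs.1
    have hsβ : 0 < s ^ β := Real.rpow_pos_of_pos hs0 β
    have hsσ : 0 < s ^ σ := Real.rpow_pos_of_pos hs0 σ
    have hLf : L2m * s ^ β ≤ Lstar f s := (hLbd f hf s (hsub hs)).1
    have hLg : L2m * s ^ β ≤ Lstar fs s := (hLbd fs hfs s (hsub hs)).1
    have hLfpos : 0 < Lstar f s := hLpos f hf s (hsub hs)
    have hLgpos : 0 < Lstar fs s := hLpos fs hfs s (hsub hs)
    have hNg : Nstar fs s ≤ N2M * s ^ σ := (hNbd fs hfs s (hsub hs)).2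
    have hNgpos : 0 < Nstar fs s :=
      lt_of_lt_of_le (mul_pos hN2m hsσ) (hNbd fs hfs s (hsub hs)).1
    have hNl : |Nstar f s - Nstar fs s| ≤ Nbar2 * D := hNlip f fs hf hfs s (hsub hs)
    have hLl : |Lstar f s - Lstar fs s| ≤ Lbar2 * D := hLlip f fs hf hfs s (hsub hs)
    have heq : Nstar f s / Lstar f s - Nstar fs s / Lstar fs s =
        (Nstar f s - Nstar fs s) / Lstar f s +
          Nstar fs s * (Lstar fs s - Lstar f s) / (Lstar f s * Lstar fs s) := by
      field_simp
      ring
    have h1 : |(Nstar f s - Nstar fs s) / Lstar f s| ≤ (Nbar2 * D) / (L2m * s ^ β) := by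
      rw [abs_div, abs_of_pos hLfpos]
      exact div_le_div₀ (by positivity) hNl (by positivity) hLf
    have h2 : |Nstar fs s * (Lstar fs s - Lstar f s) / (Lstar f s * Lstar fs s)| ≤
        (N2M * s ^ σ) * (Lbar2 * D) / ((L2m * s ^ β) * (L2m * s ^ β)) := by
      rw [abs_div, abs_mul, abs_of_pos hNgpos, abs_of_pos (mul_pos hLfpos hLgpos)]
      refine div_le_div₀ (by positivity) ?_ (by positivity) ?_
      · rw [abs_sub_comm]
        exact mul_le_mul hNg hLl (abs_nonneg _) (by positivity)
      · exact mul_le_mul hLf hLg (by positivity) (le_of_lt hLfpos)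
    have hrw1 : (Nbar2 * D) / (L2m * s ^ β) = c1 * s ^ (-β) * D := by
      rw [hc1, Real.rpow_neg hs0.le]
      field_simp
    have hrw2 : (N2M * s ^ σ) * (Lbar2 * D) / ((L2m * s ^ β) * (L2m * s ^ β)) =
        c2 * s ^ (σ - 2 * β) * D := by
      rw [hc2, Real.rpow_sub hs0, show (2:ℝ) * β = β + β by ring, Real.rpow_add hs0]
      field_simp
    calc |Nstar f s / Lstar f s - Nstar fs s / Lstar fs s|
        ≤ |(Nstar f s - Nstar fs s) / Lstar f s| +
          |Nstar fs s * (Lstar fs s - Lstar f s) / (Lstar f s * Lstar fs s)| := by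
          rw [heq]; exact abs_add_le _ _
      _ ≤ (Nbar2 * D) / (L2m * s ^ β) +
          (N2M * s ^ σ) * (Lbar2 * D) / ((L2m * s ^ β) * (L2m * s ^ β)) := add_le_add h1 h2
      _ = K s := by rw [hrw1, hrw2, hK]; ring
  -- integrability of the pieces of K
  have h0not : (0:ℝ) ∉ uIcc α₀ ξ := by
    rw [huIcc]; rintro ⟨h0, -⟩; linarith
  have hIr1 : IntervalIntegrable (fun s : ℝ => s ^ (-β)) volume α₀ ξ :=
    intervalIntegral.intervalIntegrable_rpow (Or.inr h0not)
  have hIr2 : IntervalIntegrable (fun s : ℝ => s ^ (σ - 2 * β)) volume α₀ ξ :=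
    intervalIntegral.intervalIntegrable_rpow (Or.inr h0not)
  have hIK : IntervalIntegrable K volume α₀ ξ :=
    (((hIr1.const_mul c1).add (hIr2.const_mul c2)).mul_const D)
  -- bound the integral difference
  have hABle : |(∫ s in α₀..ξ, Nstar f s / Lstar f s) -
      (∫ s in α₀..ξ, Nstar fs s / Lstar fs s)| ≤ ∫ s in α₀..ξ, K s := by
    rw [← intervalIntegral.integral_sub hIf hIfs]
    calc |∫ s in α₀..ξ, (Nstar f s / Lstar f s - Nstar fs s / Lstar fs s)|
        ≤ ∫ s in α₀..ξ, |Nstar f s / Lstar f s - Nstar fs s / Lstar fs s| :=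
          intervalIntegral.abs_integral_le_integral_abs hξ
      _ ≤ ∫ s in α₀..ξ, K s :=
          intervalIntegral.integral_mono_on hξ (hIf.sub hIfs).abs hIK key
  -- compute / bound ∫ K
  have hneq1 : -β ≠ -1 := ne_of_lt (by linarith)
  have hneq2 : σ - 2 * β ≠ -1 := ne_of_lt (by linarith)
  have hP1 : (0:ℝ) < α₀ ^ (β - 1) := Real.rpow_pos_of_pos hα₀ _
  have hP2 : (0:ℝ) < α₀ ^ (2 * β - σ - 1) := Real.rpow_pos_of_pos hα₀ _
  have hI1 : (∫ s in α₀..ξ, s ^ (-β)) ≤ 1 / ((β - 1) * α₀ ^ (β - 1)) := by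
    rw [integral_rpow (Or.inr ⟨hneq1, h0not⟩)]
    have hX : 0 < ξ ^ (-(β - 1)) := Real.rpow_pos_of_pos hξ0 _
    have hA : α₀ ^ (-(β - 1)) = (α₀ ^ (β - 1))⁻¹ := Real.rpow_neg hα₀.le _
    rw [show -β + 1 = -(β - 1) by ring, hA, div_neg, ← neg_div, neg_sub]
    rw [div_le_div_iff₀ (by linarith) (mul_pos (by linarith : (0:ℝ) < β - 1) hP1)]
    have h1 : (α₀ ^ (β - 1))⁻¹ * α₀ ^ (β - 1) = 1 := inv_mul_cancel₀ (ne_of_gt hP1)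
    nlinarith [mul_pos hX hP1, mul_pos (mul_pos hX hP1) (sub_pos.2 hβ1)]
  have hI2 : (∫ s in α₀..ξ, s ^ (σ - 2 * β)) ≤
      1 / ((2 * β - σ - 1) * α₀ ^ (2 * β - σ - 1)) := by
    rw [integral_rpow (Or.inr ⟨hneq2, h0not⟩)]
    have hX : 0 < ξ ^ (-(2 * β - σ - 1)) := Real.rpow_pos_of_pos hξ0 _
    have hA : α₀ ^ (-(2 * β - σ - 1)) = (α₀ ^ (2 * β - σ - 1))⁻¹ := Real.rpow_neg hα₀.le _
    rw [show σ - 2 * β + 1 = -(2 * β - σ - 1) by ring, hA, div_neg, ← neg_div, neg_sub]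
    rw [div_le_div_iff₀ (by linarith) (mul_pos (by linarith : (0:ℝ) < 2 * β - σ - 1) hP2)]
    have h1 : (α₀ ^ (2 * β - σ - 1))⁻¹ * α₀ ^ (2 * β - σ - 1) = 1 :=
      inv_mul_cancel₀ (ne_of_gt hP2)
    nlinarith [mul_pos hX hP2, mul_pos (mul_pos hX hP2) (sub_pos.2 h2βσ)]
  have hKint : (∫ s in α₀..ξ, K s) ≤
      (c1 * (1 / ((β - 1) * α₀ ^ (β - 1))) +
        c2 * (1 / ((2 * β - σ - 1) * α₀ ^ (2 * β - σ - 1)))) * D := by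
    have : (∫ s in α₀..ξ, K s) =
        (c1 * (∫ s in α₀..ξ, s ^ (-β)) + c2 * (∫ s in α₀..ξ, s ^ (σ - 2 * β))) * D := by
      rw [hK]
      rw [intervalIntegral.integral_mul_const,
        intervalIntegral.integral_add (hIr1.const_mul c1) (hIr2.const_mul c2),
        intervalIntegral.integral_const_mul, intervalIntegral.integral_const_mul]
    rw [this]
    gcongr
  -- nonnegativity of the exponents' arguments
  have hnonneg : ∀ (g : ℝ → ℝ), MemM α₀ g →
      0 ≤ ∫ s in α₀..ξ, Nstar g s / Lstar g s := by
    intro g hg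
    apply intervalIntegral.integral_nonneg hξ
    intro u hu
    have hu0 : 0 < u := lt_of_lt_of_le hα₀ hu.1
    have hN : 0 < Nstar g u :=
      lt_of_lt_of_le (mul_pos hN2m (Real.rpow_pos_of_pos hu0 σ)) (hNbd g hg u (hsub hu)).1
    exact le_of_lt (div_pos hN (hLpos g hg u (hsub hu)))
  -- Lipschitz step for exp
  set A := ∫ s in α₀..ξ, Nstar f s / Lstar f s with hAdef
  set B := ∫ s in α₀..ξ, Nstar fs s / Lstar fs s with hBdef
  have hexp : |E2 α₀ a Lstar Nstar f ξ - E2 α₀ a Lstar Nstar fs ξ| ≤ α₀ * a * |A - B| := by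
    have hA0 : 0 ≤ A := hnonneg f hf
    have hB0 : 0 ≤ B := hnonneg fs hfs
    have hr1 : E2 α₀ a Lstar Nstar f ξ = Real.exp (-(α₀ * a * A)) := rfl
    have hr2 : E2 α₀ a Lstar Nstar fs ξ = Real.exp (-(α₀ * a * B)) := rfl
    have := abs_exp_sub_exp_le_aux
      (x := -(α₀ * a * A)) (y := -(α₀ * a * B))
      (neg_nonpos.2 (mul_nonneg (mul_nonneg hα₀.le ha.le) hA0))
      (neg_nonpos.2 (mul_nonneg (mul_nonneg hα₀.le ha.le) hB0))
    rw [hr1, hr2]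
    calc |Real.exp (-(α₀ * a * A)) - Real.exp (-(α₀ * a * B))|
        ≤ |(-(α₀ * a * A)) - (-(α₀ * a * B))| := this
      _ = α₀ * a * |A - B| := by
          rw [show (-(α₀ * a * A)) - (-(α₀ * a * B)) = α₀ * a * (B - A) by ring,
            abs_mul, abs_of_pos (mul_pos hα₀ ha), abs_sub_comm]
  -- final assembly
  have hfinal : α₀ * a * |A - B| ≤
      (α₀ * a / L2m) * (Nbar2 / ((β - 1) * α₀ ^ (β - 1)) +
        Lbar2 * N2M / (L2m * (2 * β - σ - 1) * α₀ ^ (2 * β - σ - 1))) * D := by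
    have h1 : α₀ * a * |A - B| ≤ α₀ * a *
        ((c1 * (1 / ((β - 1) * α₀ ^ (β - 1))) +
          c2 * (1 / ((2 * β - σ - 1) * α₀ ^ (2 * β - σ - 1)))) * D) := by
      have := le_trans hABle hKint
      gcongr
    have halg : ∀ P1 P2 : ℝ, 0 < P1 → 0 < P2 →
        α₀ * a * ((Nbar2 / L2m * (1 / ((β - 1) * P1)) +
            Lbar2 * N2M / L2m ^ 2 * (1 / ((2 * β - σ - 1) * P2))) * D) =
          (α₀ * a / L2m) * (Nbar2 / ((β - 1) * P1) +
            Lbar2 * N2M / (L2m * (2 * β - σ - 1) * P2)) * D := by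
      intro P1 P2 hP1' hP2'
      have h1' : L2m ≠ 0 := ne_of_gt hL2m
      have h2' : β - 1 ≠ 0 := by intro h; rw [sub_eq_zero] at h; linarith
      have h3' : 2 * β - σ - 1 ≠ 0 := by intro h; nlinarith [h]
      have h4' : P1 ≠ 0 := ne_of_gt hP1'
      have h5' : P2 ≠ 0 := ne_of_gt hP2'
      field_simp
    refine le_trans h1 (le_of_eq ?_)
    rw [hc1, hc2]
    exact halg _ _ hP1 hP2
  exact le_trans hexp hfinal
end
end

section
/- For all f, f* ∈ M and all ξ ≥ α₀, one has |F₂(ξ,f) − F₂(ξ,f*)| ≤ F̄₂(α₀)·‖f − f*‖, where F̄₂(α₀) = (α₀·a/(β·L₂ₘ²))·(N̄₂/((β−1)·α₀^{β−1}) + L̄₂·N₂ᴹ/(L₂ₘ·(2β−σ−1)·α₀^{2β−σ−1}))·α₀^{−β} + L̄₂/(2β·L₂ₘ²·α₀^{2β}). The same bound holds with ξ = ∞, i.e. |F₂(∞,f) − F₂(∞,f*)| ≤ F̄₂(α₀)·‖f − f*‖. -/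
open Real Set Filter MeasureTheory Topology

noncomputable section

lemma abs_exp_neg_sub_exp_neg {x y : ℝ} (hx : 0 ≤ x) (hy : 0 ≤ y) :
    |Real.exp (-x) - Real.exp (-y)| ≤ |x - y| := by
  wlog h : x ≤ y generalizing x y
  · rw [abs_sub_comm, abs_sub_comm x y]; exact this hy hx (le_of_not_ge h)
  have h1 : Real.exp (-y) = Real.exp (-x) * Real.exp (x - y) := by
    rw [← Real.exp_add]; ring_nf
  have h2 : 1 + (x - y) ≤ Real.exp (x - y) := by linarith [Real.add_one_le_exp (x - y)]
  have h3 : Real.exp (-x) ≤ 1 := Real.exp_le_one_iff.mpr (by linarith)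
  have h4 : 0 < Real.exp (-x) := Real.exp_pos _
  have h5 : Real.exp (-y) ≤ Real.exp (-x) := Real.exp_le_exp.mpr (by linarith)
  rw [abs_of_nonneg (by linarith), abs_of_nonpos (by linarith)]
  nlinarith

set_option maxHeartbeats 2000000 in
theorem statement7
    (α₀ a β σ L2m L2M N2m N2M Lbar2 Nbar2 : ℝ)
    (hα₀ : 0 < α₀) (ha : 0 < a)
    (hβpos : 0 < β) (hσpos : 0 < σ) (hL2m : 0 < L2m) (hL2M : 0 < L2M)
    (hN2m : 0 < N2m) (hN2M : 0 < N2M) (hLbar2 : 0 < Lbar2) (hNbar2 : 0 < Nbar2)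
    (hβ : σ + 2 < β) (hLmM : L2m ≤ L2M) (hNmM : N2m ≤ N2M)
    (Lstar Nstar : (ℝ → ℝ) → ℝ → ℝ)
    (hLcont : ∀ f : ℝ → ℝ, MemM α₀ f → ContinuousOn (Lstar f) (Ici α₀))
    (hNcont : ∀ f : ℝ → ℝ, MemM α₀ f → ContinuousOn (Nstar f) (Ici α₀))
    (hLbd : ∀ f : ℝ → ℝ, MemM α₀ f → ∀ ξ ∈ Ici α₀,
      L2m * ξ ^ β ≤ Lstar f ξ ∧ Lstar f ξ ≤ L2M * ξ ^ β)
    (hNbd : ∀ f : ℝ → ℝ, MemM α₀ f → ∀ ξ ∈ Ici α₀,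
      N2m * ξ ^ σ ≤ Nstar f ξ ∧ Nstar f ξ ≤ N2M * ξ ^ σ)
    (hLlip : ∀ f fs : ℝ → ℝ, MemM α₀ f → MemM α₀ fs → ∀ ξ ∈ Ici α₀,
      |Lstar f ξ - Lstar fs ξ| ≤ Lbar2 * supIci α₀ (fun x => f x - fs x))
    (hNlip : ∀ f fs : ℝ → ℝ, MemM α₀ f → MemM α₀ fs → ∀ ξ ∈ Ici α₀,
      |Nstar f ξ - Nstar fs ξ| ≤ Nbar2 * supIci α₀ (fun x => f x - fs x))
    (f fs : ℝ → ℝ) (hf : MemM α₀ f) (hfs : MemM α₀ fs)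
    (Finf Finfs : ℝ)
    (hFinf : Tendsto (F2 α₀ a Lstar Nstar f) atTop (nhds Finf))
    (hFinfs : Tendsto (F2 α₀ a Lstar Nstar fs) atTop (nhds Finfs)) :
    (∀ ξ : ℝ, α₀ ≤ ξ →
      |F2 α₀ a Lstar Nstar f ξ - F2 α₀ a Lstar Nstar fs ξ| ≤
        ((α₀ * a / (β * L2m ^ 2)) * (Nbar2 / ((β - 1) * α₀ ^ (β - 1)) +
              Lbar2 * N2M / (L2m * (2 * β - σ - 1) * α₀ ^ (2 * β - σ - 1))) * α₀ ^ (-β) +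
            Lbar2 / (2 * β * L2m ^ 2 * α₀ ^ (2 * β))) *
          supIci α₀ (fun x => f x - fs x)) ∧
    |Finf - Finfs| ≤
      ((α₀ * a / (β * L2m ^ 2)) * (Nbar2 / ((β - 1) * α₀ ^ (β - 1)) +
            Lbar2 * N2M / (L2m * (2 * β - σ - 1) * α₀ ^ (2 * β - σ - 1))) * α₀ ^ (-β) +
          Lbar2 / (2 * β * L2m ^ 2 * α₀ ^ (2 * β))) *
        supIci α₀ (fun x => f x - fs x) := by
  have hβ1 : (1:ℝ) < β := by linarith
  have h2βσ : σ + 1 < 2 * β := by linarith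
  set δ := supIci α₀ (fun x => f x - fs x) with hδdef
  set Kt : ℝ := (α₀ * a / (β * L2m ^ 2)) * (Nbar2 / ((β - 1) * α₀ ^ (β - 1)) +
      Lbar2 * N2M / (L2m * (2 * β - σ - 1) * α₀ ^ (2 * β - σ - 1))) * α₀ ^ (-β) +
      Lbar2 / (2 * β * L2m ^ 2 * α₀ ^ (2 * β)) with hKt
  -- δ ≥ 0
  obtain ⟨Cf, hCf⟩ := hf.2.1
  obtain ⟨Cg, hCg⟩ := hfs.2.1
  have hbdd : BddAbove (Set.range fun ξ : Ici α₀ => |f ξ.1 - fs ξ.1|) := by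
    refine ⟨Cf + Cg, ?_⟩
    rintro x ⟨⟨t, ht⟩, rfl⟩
    have h1 := hCf t ht; have h2 := hCg t ht
    calc |f t - fs t| ≤ |f t| + |fs t| := abs_sub _ _
      _ ≤ Cf + Cg := add_le_add h1 h2
  have hδ0 : 0 ≤ δ := by
    have h := le_ciSup hbdd (⟨α₀, self_mem_Ici⟩ : Ici α₀)
    exact (abs_nonneg _).trans h
  -- positivity of Lstar, nonnegativity of Nstar
  have hLfpos : ∀ s ∈ Ici α₀, 0 < Lstar f s := fun s hs =>
    lt_of_lt_of_le (mul_pos hL2m (Real.rpow_pos_of_pos (hα₀.trans_le hs) β)) (hLbd f hf s hs).1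
  have hLgpos : ∀ s ∈ Ici α₀, 0 < Lstar fs s := fun s hs =>
    lt_of_lt_of_le (mul_pos hL2m (Real.rpow_pos_of_pos (hα₀.trans_le hs) β)) (hLbd fs hfs s hs).1
  have hNf0 : ∀ s ∈ Ici α₀, 0 ≤ Nstar f s := fun s hs =>
    le_trans (mul_pos hN2m (Real.rpow_pos_of_pos (hα₀.trans_le hs) σ)).le (hNbd f hf s hs).1
  have hNg0 : ∀ s ∈ Ici α₀, 0 ≤ Nstar fs s := fun s hs =>
    le_trans (mul_pos hN2m (Real.rpow_pos_of_pos (hα₀.trans_le hs) σ)).le (hNbd fs hfs s hs).1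
  -- continuity of the quotients
  have hQfc : ContinuousOn (fun s => Nstar f s / Lstar f s) (Ici α₀) :=
    (hNcont f hf).div (hLcont f hf) (fun s hs => (hLfpos s hs).ne')
  have hQgc : ContinuousOn (fun s => Nstar fs s / Lstar fs s) (Ici α₀) :=
    (hNcont fs hfs).div (hLcont fs hfs) (fun s hs => (hLgpos s hs).ne')
  -- interval integrability from continuity on Ici
  have hII : ∀ (g : ℝ → ℝ), ContinuousOn g (Ici α₀) → ∀ s, α₀ ≤ s →
      IntervalIntegrable g volume α₀ s := fun g hg s hs =>
    (hg.mono (by rw [uIcc_of_le hs]; exact Icc_subset_Ici_self)).intervalIntegrable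
  -- rpow continuity on Ici α₀
  have hrc : ∀ c : ℝ, ContinuousOn (fun t : ℝ => t ^ c) (Ici α₀) := fun c t ht =>
    (Real.continuousAt_rpow_const t c (Or.inl (hα₀.trans_le ht).ne')).continuousWithinAt
  -- rpow integral bound
  have hrI : ∀ c : ℝ, c < -1 → ∀ s, α₀ ≤ s →
      (∫ t in α₀..s, t ^ c) ≤ α₀ ^ (c + 1) / (-(c + 1)) := by
    intro c hc s hs
    have h0 : (0:ℝ) ∉ uIcc α₀ s := by
      rw [uIcc_of_le hs]; rintro ⟨h1, -⟩; exact absurd h1 (not_le.mpr hα₀)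
    rw [integral_rpow (Or.inr ⟨by linarith, h0⟩)]
    have h2 : (0:ℝ) ≤ s ^ (c+1) := Real.rpow_nonneg (by linarith) _
    have h3 : (0:ℝ) < -(c+1) := by linarith
    have hc1 : c + 1 ≠ 0 := by linarith
    rw [show (s ^ (c+1) - α₀ ^ (c+1)) / (c+1) = (α₀ ^ (c+1) - s ^ (c+1)) / (-(c+1)) by
      rw [div_neg, ← neg_div, neg_sub]]
    exact div_le_div₀ (Real.rpow_nonneg hα₀.le _) (by linarith) h3 le_rfl
  -- inner integral nonneg
  have hIf0 : ∀ s, α₀ ≤ s → 0 ≤ ∫ t in α₀..s, Nstar f t / Lstar f t := fun s hs =>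
    intervalIntegral.integral_nonneg hs fun t ht =>
      div_nonneg (hNf0 t ht.1) (hLfpos t ht.1).le
  have hIg0 : ∀ s, α₀ ≤ s → 0 ≤ ∫ t in α₀..s, Nstar fs t / Lstar fs t := fun s hs =>
    intervalIntegral.integral_nonneg hs fun t ht =>
      div_nonneg (hNg0 t ht.1) (hLgpos t ht.1).le
  -- pointwise bound for the difference of quotients
  have hQd : ∀ t ∈ Ici α₀,
      |Nstar f t / Lstar f t - Nstar fs t / Lstar fs t| ≤
        (Nbar2 / L2m * t ^ (-β) + Lbar2 * N2M / L2m ^ 2 * t ^ (σ - 2 * β)) * δ := by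
    intro t ht
    have ht0 : (0:ℝ) < t := hα₀.trans_le ht
    have hA : (0:ℝ) < t ^ β := Real.rpow_pos_of_pos ht0 β
    have hB : (0:ℝ) < t ^ σ := Real.rpow_pos_of_pos ht0 σ
    have hLf := hLfpos t ht; have hLg := hLgpos t ht
    have hLf1 := (hLbd f hf t ht).1
    have hLg1 := (hLbd fs hfs t ht).1
    have hNg2 := (hNbd fs hfs t ht).2
    have hNg0' := hNg0 t ht
    have hNl := hNlip f fs hf hfs t ht
    have hLl := hLlip f fs hf hfs t ht
    have key : Nstar f t / Lstar f t - Nstar fs t / Lstar fs t =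
        (Nstar f t - Nstar fs t) / Lstar f t +
          Nstar fs t * (Lstar fs t - Lstar f t) / (Lstar f t * Lstar fs t) := by
      field_simp
      ring
    rw [key]
    have t1 : |(Nstar f t - Nstar fs t) / Lstar f t| ≤ Nbar2 * δ / (L2m * t ^ β) := by
      rw [abs_div, abs_of_pos hLf]
      exact div_le_div₀ (by positivity) hNl (by positivity) hLf1
    have t2 : |Nstar fs t * (Lstar fs t - Lstar f t) / (Lstar f t * Lstar fs t)| ≤
        N2M * t ^ σ * (Lbar2 * δ) / (L2m * t ^ β * (L2m * t ^ β)) := by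
      rw [abs_div, abs_of_pos (mul_pos hLf hLg), abs_mul, abs_of_nonneg hNg0']
      refine div_le_div₀ (by positivity) ?_ (by positivity) ?_
      · refine mul_le_mul hNg2 ?_ (abs_nonneg _) (by positivity)
        rw [abs_sub_comm]; exact hLl
      · exact mul_le_mul hLf1 hLg1 (by positivity) hLf.le
    calc |(Nstar f t - Nstar fs t) / Lstar f t +
          Nstar fs t * (Lstar fs t - Lstar f t) / (Lstar f t * Lstar fs t)|
        ≤ |(Nstar f t - Nstar fs t) / Lstar f t| +
          |Nstar fs t * (Lstar fs t - Lstar f t) / (Lstar f t * Lstar fs t)| := abs_add_le _ _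
      _ ≤ Nbar2 * δ / (L2m * t ^ β) +
          N2M * t ^ σ * (Lbar2 * δ) / (L2m * t ^ β * (L2m * t ^ β)) := add_le_add t1 t2
      _ = (Nbar2 / L2m * t ^ (-β) + Lbar2 * N2M / L2m ^ 2 * t ^ (σ - 2 * β)) * δ := by
          rw [Real.rpow_neg ht0.le, show σ - 2*β = σ - (β + β) by ring,
            Real.rpow_sub ht0, Real.rpow_add ht0]
          have hA' : t ^ β ≠ 0 := hA.ne'
          have hm' : L2m ≠ 0 := hL2m.ne'
          field_simp
  -- constants
  set K1 : ℝ := Nbar2 / L2m * (α₀ ^ (-β + 1) / (-(-β + 1))) with hK1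
  set K2 : ℝ := Lbar2 * N2M / L2m ^ 2 * (α₀ ^ (σ - 2 * β + 1) / (-(σ - 2 * β + 1))) with hK2
  have hK10 : 0 ≤ K1 := by
    rw [hK1]
    exact mul_nonneg (by positivity)
      (div_pos (Real.rpow_pos_of_pos hα₀ _) (by linarith)).le
  have hK20 : 0 ≤ K2 := by
    rw [hK2]
    exact mul_nonneg (by positivity)
      (div_pos (Real.rpow_pos_of_pos hα₀ _) (by linarith)).le
  -- E2 difference bound
  have hE2d : ∀ s, α₀ ≤ s →
      |E2 α₀ a Lstar Nstar f s - E2 α₀ a Lstar Nstar fs s| ≤ α₀ * a * ((K1 + K2) * δ) := by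
    intro s hs
    have hIf := hIf0 s hs
    have hIg := hIg0 s hs
    have hsub : |(∫ t in α₀..s, Nstar f t / Lstar f t) -
        ∫ t in α₀..s, Nstar fs t / Lstar fs t| ≤ (K1 + K2) * δ := by
      rw [← intervalIntegral.integral_sub (hII _ hQfc s hs) (hII _ hQgc s hs)]
      refine (intervalIntegral.abs_integral_le_integral_abs hs).trans ?_
      have hint1 : IntervalIntegrable
          (fun t => |Nstar f t / Lstar f t - Nstar fs t / Lstar fs t|) volume α₀ s :=
        hII _ (hQfc.sub hQgc).abs s hs
      have hint2 : IntervalIntegrable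
          (fun t => (Nbar2 / L2m * t ^ (-β) + Lbar2 * N2M / L2m ^ 2 * t ^ (σ - 2 * β)) * δ)
          volume α₀ s :=
        (((hII _ (hrc (-β)) s hs).const_mul _).add
          ((hII _ (hrc (σ - 2*β)) s hs).const_mul _)).mul_const _
      refine (intervalIntegral.integral_mono_on hs hint1 hint2
        (fun t ht => hQd t ht.1)).trans ?_
      rw [intervalIntegral.integral_mul_const,
        intervalIntegral.integral_add ((hII _ (hrc (-β)) s hs).const_mul _)
          ((hII _ (hrc (σ - 2*β)) s hs).const_mul _),
        intervalIntegral.integral_const_mul, intervalIntegral.integral_const_mul]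
      have b1 := hrI (-β) (by linarith) s hs
      have b2 := hrI (σ - 2*β) (by linarith) s hs
      refine mul_le_mul_of_nonneg_right ?_ hδ0
      rw [hK1, hK2]
      exact add_le_add (mul_le_mul_of_nonneg_left b1 (by positivity))
        (mul_le_mul_of_nonneg_left b2 (by positivity))
    have h1 : |E2 α₀ a Lstar Nstar f s - E2 α₀ a Lstar Nstar fs s| ≤
        |α₀ * a * (∫ t in α₀..s, Nstar f t / Lstar f t) -
          α₀ * a * ∫ t in α₀..s, Nstar fs t / Lstar fs t| := by
      exact abs_exp_neg_sub_exp_neg (by positivity) (by positivity)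
    refine h1.trans ?_
    rw [← mul_sub, abs_mul, abs_of_nonneg (by positivity)]
    exact mul_le_mul_of_nonneg_left hsub (by positivity)
  -- pointwise bound for the F2 integrand difference
  have hDp : ∀ s, α₀ ≤ s →
      |E2 α₀ a Lstar Nstar f s / (s * Lstar f s) -
        E2 α₀ a Lstar Nstar fs s / (s * Lstar fs s)| ≤
        (α₀ * a * ((K1 + K2) * δ) / L2m) * s ^ (-β - 1) +
          (Lbar2 * δ / L2m ^ 2) * s ^ (-(2*β) - 1) := by
    intro s hs
    have hs0 : (0:ℝ) < s := hα₀.trans_le hs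
    have hA : (0:ℝ) < s ^ β := Real.rpow_pos_of_pos hs0 β
    have hLf := hLfpos s hs; have hLg := hLgpos s hs
    have hLf1 := (hLbd f hf s hs).1
    have hLg1 := (hLbd fs hfs s hs).1
    have hLl := hLlip f fs hf hfs s hs
    have hE2g1 : E2 α₀ a Lstar Nstar fs s ≤ 1 := by
      show Real.exp _ ≤ 1
      rw [Real.exp_le_one_iff]
      have := hIg0 s hs
      have h := mul_nonneg (mul_nonneg hα₀.le ha.le) this
      linarith
    have hE2g0 : 0 ≤ E2 α₀ a Lstar Nstar fs s := (Real.exp_pos _).le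
    have key : E2 α₀ a Lstar Nstar f s / (s * Lstar f s) -
        E2 α₀ a Lstar Nstar fs s / (s * Lstar fs s) =
        (E2 α₀ a Lstar Nstar f s - E2 α₀ a Lstar Nstar fs s) / (s * Lstar f s) +
          E2 α₀ a Lstar Nstar fs s * (Lstar fs s - Lstar f s) / (s * (Lstar f s * Lstar fs s)) := by
      field_simp
      ring
    rw [key]
    have t1 : |(E2 α₀ a Lstar Nstar f s - E2 α₀ a Lstar Nstar fs s) / (s * Lstar f s)| ≤
        α₀ * a * ((K1 + K2) * δ) / (s * (L2m * s ^ β)) := by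
      rw [abs_div, abs_of_pos (mul_pos hs0 hLf)]
      refine div_le_div₀ (by positivity) (hE2d s hs) (by positivity) ?_
      exact mul_le_mul_of_nonneg_left hLf1 hs0.le
    have t2 : |E2 α₀ a Lstar Nstar fs s * (Lstar fs s - Lstar f s) /
        (s * (Lstar f s * Lstar fs s))| ≤
        1 * (Lbar2 * δ) / (s * (L2m * s ^ β * (L2m * s ^ β))) := by
      rw [abs_div, abs_of_pos (mul_pos hs0 (mul_pos hLf hLg)), abs_mul,
        abs_of_nonneg hE2g0]
      refine div_le_div₀ (by positivity) ?_ (by positivity) ?_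
      · refine mul_le_mul hE2g1 ?_ (abs_nonneg _) zero_le_one
        rw [abs_sub_comm]; exact hLl
      · exact mul_le_mul_of_nonneg_left
          (mul_le_mul hLf1 hLg1 (by positivity) hLf.le) hs0.le
    calc |(E2 α₀ a Lstar Nstar f s - E2 α₀ a Lstar Nstar fs s) / (s * Lstar f s) +
          E2 α₀ a Lstar Nstar fs s * (Lstar fs s - Lstar f s) / (s * (Lstar f s * Lstar fs s))|
        ≤ |(E2 α₀ a Lstar Nstar f s - E2 α₀ a Lstar Nstar fs s) / (s * Lstar f s)| +
          |E2 α₀ a Lstar Nstar fs s * (Lstar fs s - Lstar f s) /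
            (s * (Lstar f s * Lstar fs s))| := abs_add_le _ _
      _ ≤ α₀ * a * ((K1 + K2) * δ) / (s * (L2m * s ^ β)) +
          1 * (Lbar2 * δ) / (s * (L2m * s ^ β * (L2m * s ^ β))) := add_le_add t1 t2
      _ = (α₀ * a * ((K1 + K2) * δ) / L2m) * s ^ (-β - 1) +
          (Lbar2 * δ / L2m ^ 2) * s ^ (-(2*β) - 1) := by
          rw [show -β - 1 = -(β + 1) by ring, show -(2*β) - 1 = -(β + (β + 1)) by ring,
            Real.rpow_neg hs0.le, Real.rpow_neg hs0.le, Real.rpow_add hs0,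
            Real.rpow_add hs0, Real.rpow_add hs0, Real.rpow_one]
          have hA' : s ^ β ≠ 0 := hA.ne'
          have hm' : L2m ≠ 0 := hL2m.ne'
          field_simp
  -- main pointwise estimate
  have hmain : ∀ ξ : ℝ, α₀ ≤ ξ →
      |F2 α₀ a Lstar Nstar f ξ - F2 α₀ a Lstar Nstar fs ξ| ≤ Kt * δ := by
    intro ξ hξ
    have hIci : Icc α₀ ξ ⊆ Ici α₀ := Icc_subset_Ici_self
    have hE2fc : ContinuousOn (E2 α₀ a Lstar Nstar f) (Icc α₀ ξ) := by
      show ContinuousOn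
        (fun s => Real.exp (-(α₀ * a * ∫ t in α₀..s, Nstar f t / Lstar f t))) (Icc α₀ ξ)
      refine Real.continuous_exp.comp_continuousOn ((continuousOn_const.mul ?_).neg)
      have h := intervalIntegral.continuousOn_primitive_interval (a := α₀) (b := ξ)
        (μ := volume) (f := fun t => Nstar f t / Lstar f t)
        (by rw [uIcc_of_le hξ]; exact (hQfc.mono hIci).integrableOn_Icc)
      rwa [uIcc_of_le hξ] at h
    have hE2gc : ContinuousOn (E2 α₀ a Lstar Nstar fs) (Icc α₀ ξ) := by
      show ContinuousOn
        (fun s => Real.exp (-(α₀ * a * ∫ t in α₀..s, Nstar fs t / Lstar fs t))) (Icc α₀ ξ)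
      refine Real.continuous_exp.comp_continuousOn ((continuousOn_const.mul ?_).neg)
      have h := intervalIntegral.continuousOn_primitive_interval (a := α₀) (b := ξ)
        (μ := volume) (f := fun t => Nstar fs t / Lstar fs t)
        (by rw [uIcc_of_le hξ]; exact (hQgc.mono hIci).integrableOn_Icc)
      rwa [uIcc_of_le hξ] at h
    have hGfc : ContinuousOn (fun s => E2 α₀ a Lstar Nstar f s / (s * Lstar f s)) (Icc α₀ ξ) :=
      hE2fc.div (continuousOn_id.mul ((hLcont f hf).mono hIci))
        (fun s hs => (mul_pos (hα₀.trans_le hs.1) (hLfpos s hs.1)).ne')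
    have hGgc : ContinuousOn (fun s => E2 α₀ a Lstar Nstar fs s / (s * Lstar fs s)) (Icc α₀ ξ) :=
      hE2gc.div (continuousOn_id.mul ((hLcont fs hfs).mono hIci))
        (fun s hs => (mul_pos (hα₀.trans_le hs.1) (hLgpos s hs.1)).ne')
    have hIIc : ∀ (g : ℝ → ℝ), ContinuousOn g (Icc α₀ ξ) → IntervalIntegrable g volume α₀ ξ :=
      fun g hg => ContinuousOn.intervalIntegrable (by rwa [uIcc_of_le hξ])
    have hc10 : 0 ≤ α₀ * a * ((K1 + K2) * δ) / L2m :=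
      div_nonneg (mul_nonneg (by positivity) (mul_nonneg (by linarith) hδ0)) hL2m.le
    have hc20 : 0 ≤ Lbar2 * δ / L2m ^ 2 := div_nonneg (mul_nonneg hLbar2.le hδ0) (by positivity)
    simp only [F2]
    rw [← intervalIntegral.integral_sub (hIIc _ hGfc) (hIIc _ hGgc)]
    refine (intervalIntegral.abs_integral_le_integral_abs hξ).trans ?_
    have hint1 : IntervalIntegrable (fun s => |E2 α₀ a Lstar Nstar f s / (s * Lstar f s) -
        E2 α₀ a Lstar Nstar fs s / (s * Lstar fs s)|) volume α₀ ξ :=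
      hIIc _ (hGfc.sub hGgc).abs
    have hint2 : IntervalIntegrable (fun s =>
        (α₀ * a * ((K1 + K2) * δ) / L2m) * s ^ (-β - 1) +
          (Lbar2 * δ / L2m ^ 2) * s ^ (-(2*β) - 1)) volume α₀ ξ :=
      ((hII _ (hrc _) ξ hξ).const_mul _).add ((hII _ (hrc _) ξ hξ).const_mul _)
    refine (intervalIntegral.integral_mono_on hξ hint1 hint2 (fun s hs => hDp s hs.1)).trans ?_
    rw [intervalIntegral.integral_add ((hII _ (hrc _) ξ hξ).const_mul _)
        ((hII _ (hrc _) ξ hξ).const_mul _),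
      intervalIntegral.integral_const_mul, intervalIntegral.integral_const_mul]
    have b1 := hrI (-β - 1) (by linarith) ξ hξ
    have b2 := hrI (-(2*β) - 1) (by linarith) ξ hξ
    refine le_trans (add_le_add (mul_le_mul_of_nonneg_left b1 hc10)
      (mul_le_mul_of_nonneg_left b2 hc20)) (le_of_eq ?_)
    rw [show -β - 1 + 1 = -β by ring, show -(2*β) - 1 + 1 = -(2*β) by ring,
      neg_neg, neg_neg, hKt, hK1, hK2,
      show -β + 1 = -(β-1) by ring, show σ - 2*β + 1 = -(2*β - σ - 1) by ring,
      Real.rpow_neg hα₀.le (β-1), Real.rpow_neg hα₀.le (2*β-σ-1), Real.rpow_neg hα₀.le (2*β)]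
    have hX : α₀ ^ (β-1) ≠ 0 := (Real.rpow_pos_of_pos hα₀ _).ne'
    have hY : α₀ ^ (2*β-σ-1) ≠ 0 := (Real.rpow_pos_of_pos hα₀ _).ne'
    have hZ : α₀ ^ (2*β) ≠ 0 := (Real.rpow_pos_of_pos hα₀ _).ne'
    have hW : α₀ ^ (-β) ≠ 0 := (Real.rpow_pos_of_pos hα₀ _).ne'
    have hb0 : β ≠ 0 := hβpos.ne'
    have hb1 : β - 1 ≠ 0 := by intro h; exact absurd h (by intro h; linarith)
    have hb2 : 2*β - σ - 1 ≠ 0 := by intro h; linarith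
    have hm0 : L2m ≠ 0 := hL2m.ne'
    field_simp
  refine ⟨hmain, ?_⟩
  have hlim : Tendsto (fun ξ => |F2 α₀ a Lstar Nstar f ξ - F2 α₀ a Lstar Nstar fs ξ|)
      atTop (nhds |Finf - Finfs|) := (hFinf.sub hFinfs).abs
  exact le_of_tendsto hlim (eventually_atTop.mpr ⟨α₀, fun ξ hξ => hmain ξ hξ⟩)
end
end

section
/- The function φ̂ : (0,∞) → ℝ defined by φ̂(z) = 2·L₂ᴹ·β·z^β·F̄₂(z)·exp(a·N₂ᴹ/(L₂ₘ·(β−σ−1)·z^{β−σ−2})), where F̄₂(z) = (z·a/(β·L₂ₘ²))·(N̄₂/((β−1)·z^{β−1}) + L̄₂·N₂ᴹ/(L₂ₘ·(2β−σ−1)·z^{2β−σ−1}))·z^{−β} + L̄₂/(2β·L₂ₘ²·z^{2β}), is strictly decreasing on (0,∞), tends to +∞ as z → 0⁺, and tends to 0 as z → +∞. Consequently there is a unique α₀₁ > 0 with φ̂(α₀₁) = 1, and φ̂(z) < 1 for all z > α₀₁. -/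
/-!
For `z > 0`, clearing the denominators of `F̄₂` gives
`φ̂(z) = (c₁ z^(2-β) + c₂ z^(σ+2-2β) + c₃ z^(-β)) · exp (c z^(σ+2-β))`
with `c₁, c₂, c ≥ 0` and `c₃ > 0`, and `β > σ + 2` makes all four exponents negative.
So `φ̂` is a positive strictly decreasing factor times a positive nonincreasing one, it blows up
like `c₃ z^(-β)` at `0⁺`, and it tends to `0 · 1` at `+∞`; by continuity and the intermediate
value theorem it takes the value `1` exactly once.
-/

open Real Set Filter Topology

noncomputable section

/-- `F̄₂(z)`. -/
def Fbar2 (a β σ L2m N2M Lbar2 Nbar2 : ℝ) (z : ℝ) : ℝ :=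
  (z * a / (β * L2m ^ 2)) * (Nbar2 / ((β - 1) * z ^ (β - 1)) +
      Lbar2 * N2M / (L2m * (2 * β - σ - 1) * z ^ (2 * β - σ - 1))) * z ^ (-β) +
    Lbar2 / (2 * β * L2m ^ 2 * z ^ (2 * β))

/-- `φ̂(z) = 2·L₂ᴹ·β·z^β·F̄₂(z)·exp(a·N₂ᴹ/(L₂ₘ·(β−σ−1)·z^{β−σ−2}))`. -/
def phihat (a β σ L2m L2M N2M Lbar2 Nbar2 : ℝ) (z : ℝ) : ℝ :=
  2 * L2M * β * z ^ β * Fbar2 a β σ L2m N2M Lbar2 Nbar2 z *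
    Real.exp (a * N2M / (L2m * (β - σ - 1) * z ^ (β - σ - 2)))

def rpowSumMulExp (c₁ c₂ c₃ p₁ p₂ p₃ c q : ℝ) (z : ℝ) : ℝ :=
  (c₁ * z ^ p₁ + c₂ * z ^ p₂ + c₃ * z ^ p₃) * exp (c * z ^ q)

section rpowSumMulExp

variable {c₁ c₂ c₃ p₁ p₂ p₃ c q : ℝ}

theorem continuousOn_rpowSumMulExp :
    ContinuousOn (rpowSumMulExp c₁ c₂ c₃ p₁ p₂ p₃ c q) (Ioi 0) := by
  unfold rpowSumMulExp
  have : ∀ x ∈ Ioi (0:ℝ), x ≠ 0 := fun x hx => ne_of_gt hx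
  fun_prop (disch := assumption)

theorem strictAntiOn_rpowSumMulExp (hc₁ : 0 ≤ c₁) (hc₂ : 0 ≤ c₂) (hc₃ : 0 < c₃) (hc : 0 ≤ c)
    (hp₁ : p₁ < 0) (hp₂ : p₂ < 0) (hp₃ : p₃ < 0) (hq : q < 0) :
    StrictAntiOn (rpowSumMulExp c₁ c₂ c₃ p₁ p₂ p₃ c q) (Ioi 0) := by
  intro x (hx : 0 < x) y (hy : 0 < y) hxy
  have hpow {p : ℝ} (hp : p < 0) : y ^ p < x ^ p := rpow_lt_rpow_of_neg hx hxy hp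
  have hsum :
      c₁ * y ^ p₁ + c₂ * y ^ p₂ + c₃ * y ^ p₃ < c₁ * x ^ p₁ + c₂ * x ^ p₂ + c₃ * x ^ p₃ := by
    refine add_lt_add_of_le_of_lt (add_le_add ?_ ?_) ?_
    · exact mul_le_mul_of_nonneg_left (hpow hp₁).le hc₁
    · exact mul_le_mul_of_nonneg_left (hpow hp₂).le hc₂
    · exact mul_lt_mul_of_pos_left (hpow hp₃) hc₃
  have hexp : exp (c * y ^ q) ≤ exp (c * x ^ q) :=
    exp_le_exp.2 (mul_le_mul_of_nonneg_left (hpow hq).le hc)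
  exact mul_lt_mul hsum hexp (exp_pos _) (by positivity)

theorem tendsto_rpowSumMulExp_nhdsGT_zero (hc₁ : 0 ≤ c₁) (hc₂ : 0 ≤ c₂) (hc₃ : 0 < c₃)
    (hc : 0 ≤ c) (hp₃ : p₃ < 0) :
    Tendsto (rpowSumMulExp c₁ c₂ c₃ p₁ p₂ p₃ c q) (𝓝[>] 0) atTop := by
  refine tendsto_atTop_mono' _ ?_ ((tendsto_rpow_neg_nhdsGT_zero hp₃).const_mul_atTop hc₃)
  filter_upwards [self_mem_nhdsWithin] with z (hz : 0 < z)
  calc c₃ * z ^ p₃ ≤ c₁ * z ^ p₁ + c₂ * z ^ p₂ + c₃ * z ^ p₃ := by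
        have := mul_nonneg hc₁ (rpow_nonneg hz.le p₁)
        have := mul_nonneg hc₂ (rpow_nonneg hz.le p₂)
        linarith
    _ ≤ rpowSumMulExp c₁ c₂ c₃ p₁ p₂ p₃ c q z :=
        le_mul_of_one_le_right (by positivity) (one_le_exp (by positivity))

theorem tendsto_rpowSumMulExp_atTop (hp₁ : p₁ < 0) (hp₂ : p₂ < 0) (hp₃ : p₃ < 0) (hq : q < 0) :
    Tendsto (rpowSumMulExp c₁ c₂ c₃ p₁ p₂ p₃ c q) atTop (𝓝 0) := by
  have hpow {p : ℝ} (hp : p < 0) : Tendsto (fun z : ℝ => z ^ p) atTop (𝓝 0) := by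
    simpa using tendsto_rpow_neg_atTop (neg_pos.2 hp)
  have hsum := (((hpow hp₁).const_mul c₁).add ((hpow hp₂).const_mul c₂)).add
    ((hpow hp₃).const_mul c₃)
  have hexp := ((hpow hq).const_mul c).rexp
  unfold rpowSumMulExp
  simpa using hsum.mul hexp

end rpowSumMulExp

theorem existsUnique_eq_of_strictAntiOn_Ioi {f : ℝ → ℝ} {v y : ℝ} (hvy : v < y)
    (hanti : StrictAntiOn f (Ioi 0)) (hcont : ContinuousOn f (Ioi 0))
    (h0 : Tendsto f (𝓝[>] 0) atTop) (htop : Tendsto f atTop (𝓝 v)) :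
    ∃! z, 0 < z ∧ f z = y := by
  obtain ⟨z, hz, hfz⟩ := isPreconnected_Ioi.intermediate_value_Ioi
    (le_principal_iff.2 (Ioi_mem_atTop 0)) (le_principal_iff.2 self_mem_nhdsWithin) hcont htop h0
    hvy
  exact ⟨z, ⟨hz, hfz⟩, fun w ⟨hw, hfw⟩ => hanti.injOn hw hz (hfw.trans hfz.symm)⟩

theorem phihat_eq_rpowSumMulExp {a β σ L2m L2M N2M Lbar2 Nbar2 z : ℝ} (hβ : β ≠ 0)
    (hL2m : L2m ≠ 0) (hz : 0 < z) :
    phihat a β σ L2m L2M N2M Lbar2 Nbar2 z =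
      rpowSumMulExp (2 * L2M * a * Nbar2 / (L2m ^ 2 * (β - 1)))
        (2 * L2M * a * Lbar2 * N2M / (L2m ^ 3 * (2 * β - σ - 1))) (L2M * Lbar2 / L2m ^ 2)
        (2 - β) (σ + 2 - 2 * β) (-β) (a * N2M / (L2m * (β - σ - 1))) (σ + 2 - β) z := by
  have hu : z ^ β ≠ 0 := (rpow_pos_of_pos hz β).ne'
  have hv : z ^ σ ≠ 0 := (rpow_pos_of_pos hz σ).ne'
  simp only [phihat, Fbar2, rpowSumMulExp, two_mul, rpow_sub hz, rpow_add hz, rpow_neg hz.le,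
    rpow_one, rpow_two]
  field_simp

theorem statement11
    (a β σ L2m L2M N2M Lbar2 Nbar2 : ℝ)
    (ha : 0 < a) (hβpos : 0 < β) (hσpos : 0 < σ) (hL2m : 0 < L2m) (hL2M : 0 < L2M)
    (hN2M : 0 < N2M) (hLbar2 : 0 < Lbar2) (hNbar2 : 0 < Nbar2)
    (hβ : σ + 2 < β) :
    StrictAntiOn (phihat a β σ L2m L2M N2M Lbar2 Nbar2) (Ioi 0) ∧
    Tendsto (phihat a β σ L2m L2M N2M Lbar2 Nbar2) (nhdsWithin 0 (Ioi 0)) atTop ∧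
    Tendsto (phihat a β σ L2m L2M N2M Lbar2 Nbar2) atTop (nhds 0) ∧
    (∃! z : ℝ, 0 < z ∧ phihat a β σ L2m L2M N2M Lbar2 Nbar2 z = 1) ∧
    (∀ z w : ℝ, 0 < z → phihat a β σ L2m L2M N2M Lbar2 Nbar2 z = 1 → z < w →
      phihat a β σ L2m L2M N2M Lbar2 Nbar2 w < 1) := by
  have hc₁ : 0 ≤ 2 * L2M * a * Nbar2 / (L2m ^ 2 * (β - 1)) := by
    have : 0 < β - 1 := by linarith
    positivity
  have hc₂ : 0 ≤ 2 * L2M * a * Lbar2 * N2M / (L2m ^ 3 * (2 * β - σ - 1)) := by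
    have : 0 < 2 * β - σ - 1 := by linarith
    positivity
  have hc₃ : 0 < L2M * Lbar2 / L2m ^ 2 := by positivity
  have hc : 0 ≤ a * N2M / (L2m * (β - σ - 1)) := by
    have : 0 < β - σ - 1 := by linarith
    positivity
  set g := rpowSumMulExp (2 * L2M * a * Nbar2 / (L2m ^ 2 * (β - 1)))
    (2 * L2M * a * Lbar2 * N2M / (L2m ^ 3 * (2 * β - σ - 1))) (L2M * Lbar2 / L2m ^ 2)
    (2 - β) (σ + 2 - 2 * β) (-β) (a * N2M / (L2m * (β - σ - 1))) (σ + 2 - β)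
  have hgφ : EqOn g (phihat a β σ L2m L2M N2M Lbar2 Nbar2) (Ioi 0) :=
    fun _ hz => (phihat_eq_rpowSumMulExp hβpos.ne' hL2m.ne' hz).symm
  have hanti : StrictAntiOn g (Ioi 0) := strictAntiOn_rpowSumMulExp hc₁ hc₂ hc₃ hc
    (by linarith) (by linarith) (by linarith) (by linarith)
  have h0 : Tendsto g (𝓝[>] 0) atTop :=
    tendsto_rpowSumMulExp_nhdsGT_zero hc₁ hc₂ hc₃ hc (neg_lt_zero.2 hβpos)
  have htop : Tendsto g atTop (𝓝 0) :=
    tendsto_rpowSumMulExp_atTop (by linarith) (by linarith) (by linarith) (by linarith)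
  replace hanti := hanti.congr hgφ
  replace h0 := h0.congr' (eventuallyEq_nhdsWithin_of_eqOn hgφ)
  replace htop := htop.congr' (hgφ.eventuallyEq_of_mem (Ioi_mem_atTop 0))
  refine ⟨hanti, h0, htop, existsUnique_eq_of_strictAntiOn_Ioi one_pos hanti
    (continuousOn_rpowSumMulExp.congr hgφ.symm) h0 htop, fun z w hz hz1 hzw => ?_⟩
  exact hz1 ▸ hanti hz (hz.trans hzw) hzw
end
end
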